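/- arXiv:2202.10723 — 6 statements merged into one kernel-verified Lean document; each statement's English description precedes it below -/
import Mathlib

section
/- Let X and Y be measurable spaces, let λ be a finite nonnegative measure on Y, let A ⊆ X × Y be a measurable set, and let 1 ≤ p < ∞ with conjugate exponent p′ ∈ (1, ∞] satisfying 1/p + 1/p′ = 1 (p′ = ∞ when p = 1, the L^∞ norm being the λ-essential supremum). For a measurable function h : Y → ℝ with ‖h‖_{L^{p′}(Y, λ)} ≤ 1, define f_h(x) := ∫_Y 1_A(x, y) h(y) λ(dy). Then for all Borel probability measures μ, ν on X, sup { ∫_X f_h dμ − ∫_X f_h dν : h measurable, ‖h‖_{L^{p′}(Y, λ)} ≤ 1 } = ( ∫_Y | μ(A_y) − ν(A_y) |^p λ(dy) )^{1/p}, where A_y := { x ∈ X : (x, y) ∈ A }. -/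
/-!
By Fubini, the pairing `∫ f_h dμ - ∫ f_h dν` equals `∫ g h dλ` with
`g y = μ(A_y) - ν(A_y)`, so the supremum is the norm of `g ∈ Lᵖ(λ)` computed by duality against
the unit ball of `L^{p'}(λ)`. Hölder's inequality gives the upper bound, and it is attained at the
normalised duality map `h = g |g|^{p-2} / ‖g‖_p^{p-1}` (the sign of `g` when `p = 1`).
-/

open MeasureTheory ENNReal

lemma mul_mul_abs_rpow_sub_two {p : ℝ} (hp : 0 < p) (x : ℝ) :
    x * (x * |x| ^ (p - 2)) = |x| ^ p := by
  rcases eq_or_ne x 0 with rfl | hx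
  · simp [Real.zero_rpow hp.ne']
  calc x * (x * |x| ^ (p - 2)) = |x| ^ (2 : ℝ) * |x| ^ (p - 2) := by
        rw [Real.rpow_two, sq_abs]; ring
    _ = |x| ^ p := by rw [← Real.rpow_add (abs_pos.mpr hx)]; ring_nf

lemma abs_mul_abs_rpow_sub_two_le (p x : ℝ) : |x * |x| ^ (p - 2)| ≤ |x| ^ (p - 1) := by
  rcases eq_or_ne x 0 with rfl | hx
  · simpa using Real.rpow_nonneg le_rfl _
  refine le_of_eq ?_
  rw [abs_mul, abs_of_nonneg (Real.rpow_nonneg (abs_nonneg x) _)]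
  calc |x| * |x| ^ (p - 2) = |x| ^ (1 + (p - 2)) := by
        rw [Real.rpow_add (abs_pos.mpr hx), Real.rpow_one]
    _ = |x| ^ (p - 1) := by ring_nf

section Duality

variable {Y : Type*} [MeasurableSpace Y] {lam : Measure Y} {p q : ℝ≥0∞}

theorem integral_mul_le_lpNorm [p.HolderConjugate q] {g h : Y → ℝ} (hg : MemLp g p lam)
    (hh : AEStronglyMeasurable h lam) (h_le : eLpNorm h q lam ≤ 1) :
    ∫ y, g y * h y ∂lam ≤ lpNorm g p lam := by
  have holder : ‖∫ y, g y * h y ∂lam‖ₑ ≤ eLpNorm g p lam :=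
    calc ‖∫ y, g y * h y ∂lam‖ₑ ≤ eLpNorm (fun y => g y * h y) 1 lam :=
          (enorm_integral_le_lintegral_enorm _).trans_eq eLpNorm_one_eq_lintegral_enorm.symm
      _ ≤ 1 * eLpNorm g p lam * eLpNorm h q lam :=
          eLpNorm_le_eLpNorm_mul_eLpNorm'_of_norm hg.1 hh (· * ·) 1
            (.of_forall fun y => by simp [norm_mul])
      _ ≤ eLpNorm g p lam := by simpa using mul_le_of_le_one_right' h_le
  rw [← toReal_eLpNorm hg.1]
  calc ∫ y, g y * h y ∂lam ≤ ‖∫ y, g y * h y ∂lam‖ := Real.le_norm_self _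
    _ = ‖∫ y, g y * h y ∂lam‖ₑ.toReal := (toReal_enorm _).symm
    _ ≤ (eLpNorm g p lam).toReal := ENNReal.toReal_mono hg.2.ne holder

theorem eLpNorm_abs_rpow_sub_one_le [p.HolderConjugate q] (hp : p ≠ ∞) {g : Y → ℝ}
    (hg : MemLp g p lam) :
    eLpNorm (fun y => |g y| ^ (p.toReal - 1)) q lam ≤
      ENNReal.ofReal (lpNorm g p lam ^ (p.toReal - 1)) := by
  rcases eq_or_ne q ∞ with rfl | hq
  · obtain rfl : p = 1 := by simpa using (HolderTriple.inv_eq p ∞ 1).symm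
    simpa using eLpNormEssSup_le_of_ae_bound (μ := lam) (f := fun _ : Y => (1 : ℝ)) (C := 1)
      (.of_forall fun _ => by simp)
  · have hreal : p.toReal.HolderConjugate q.toReal := HolderConjugate.toReal_of_ne_top hp hq
    have hexp : q * ENNReal.ofReal (p.toReal - 1) = p := by
      rw [← ofReal_toReal hq, ← ofReal_mul toReal_nonneg, mul_comm, hreal.sub_one_mul_conj,
        ofReal_toReal hp]
    have hpos : 0 < p.toReal - 1 := sub_pos.mpr hreal.lt
    simp_rw [← Real.norm_eq_abs]
    rw [eLpNorm_norm_rpow g hpos, hexp, ← ofReal_lpNorm hg,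
      ofReal_rpow_of_nonneg lpNorm_nonneg hpos.le]

theorem exists_eLpNorm_le_one_integral_mul_eq_lpNorm [p.HolderConjugate q] (hp : p ≠ ∞)
    {g : Y → ℝ} (hgm : Measurable g) (hg : MemLp g p lam) :
    ∃ h : Y → ℝ, Measurable h ∧ eLpNorm h q lam ≤ 1 ∧ ∫ y, g y * h y ∂lam = lpNorm g p lam := by
  have hr : 1 ≤ p.toReal := by simpa using toReal_mono hp (HolderConjugate.one_le p q)
  have hNr : lpNorm g p lam ^ p.toReal = ∫ y, |g y| ^ p.toReal ∂lam := by
    rw [lpNorm_eq_integral_norm_rpow_toReal (HolderConjugate.ne_zero p q) hp hg.1,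
      Real.rpow_inv_rpow (integral_nonneg fun _ => by positivity) (by linarith)]
    rfl
  set r := p.toReal
  set N := lpNorm g p lam
  have hc : 0 ≤ (N ^ (r - 1))⁻¹ := inv_nonneg.mpr (Real.rpow_nonneg lpNorm_nonneg _)
  refine ⟨fun y => (N ^ (r - 1))⁻¹ * (g y * |g y| ^ (r - 2)), by fun_prop, ?_, ?_⟩
  · calc eLpNorm (fun y => (N ^ (r - 1))⁻¹ * (g y * |g y| ^ (r - 2))) q lam
        = ‖(N ^ (r - 1))⁻¹‖ₑ * eLpNorm (fun y => g y * |g y| ^ (r - 2)) q lam :=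
          eLpNorm_const_smul (N ^ (r - 1))⁻¹ (fun y => g y * |g y| ^ (r - 2)) q lam
      _ ≤ ENNReal.ofReal (N ^ (r - 1))⁻¹ * eLpNorm (fun y => |g y| ^ (r - 1)) q lam := by
          rw [Real.enorm_of_nonneg hc]
          gcongr
          exact eLpNorm_mono_real fun y => abs_mul_abs_rpow_sub_two_le r (g y)
      _ ≤ ENNReal.ofReal (N ^ (r - 1))⁻¹ * ENNReal.ofReal (N ^ (r - 1)) := by
          gcongr
          exact eLpNorm_abs_rpow_sub_one_le hp hg
      _ ≤ 1 := by
          rw [← ofReal_mul hc, ← ofReal_one]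
          exact ofReal_le_ofReal inv_mul_le_one
  · calc ∫ y, g y * ((N ^ (r - 1))⁻¹ * (g y * |g y| ^ (r - 2))) ∂lam
        = (N ^ (r - 1))⁻¹ * ∫ y, |g y| ^ r ∂lam := by
          rw [← integral_const_mul]
          congr with y
          rw [mul_left_comm, mul_mul_abs_rpow_sub_two (by linarith)]
      _ = N := by
          rw [← hNr]
          rcases eq_or_ne N 0 with hN | hN
          · rw [hN, Real.zero_rpow (show r ≠ 0 by linarith), mul_zero]
          · have hNr0 : N ^ r ≠ 0 := (Real.rpow_pos_of_pos (lpNorm_nonneg.lt_of_ne' hN) r).ne'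
            rw [Real.rpow_sub_one hN, inv_div, div_mul_cancel₀ _ hNr0]

theorem isGreatest_integral_mul_lpNorm [p.HolderConjugate q] (hp : p ≠ ∞)
    {g : Y → ℝ} (hgm : Measurable g) (hg : MemLp g p lam) :
    IsGreatest {r | ∃ h : Y → ℝ, Measurable h ∧ eLpNorm h q lam ≤ 1 ∧ r = ∫ y, g y * h y ∂lam}
      (lpNorm g p lam) := by
  refine ⟨?_, ?_⟩
  · obtain ⟨h, hm, h_le, h_eq⟩ := exists_eLpNorm_le_one_integral_mul_eq_lpNorm (q := q) hp hgm hg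
    exact ⟨h, hm, h_le, h_eq.symm⟩
  · rintro r ⟨h, hm, h_le, rfl⟩
    exact integral_mul_le_lpNorm hg hm.aestronglyMeasurable h_le

end Duality

section Sections

variable {X Y : Type*} [MeasurableSpace X] [MeasurableSpace Y] {μ : Measure X}
  {lam : Measure Y} {A : Set (X × Y)} {h : Y → ℝ}

lemma integral_indicator_comp_snd_eq (hA : MeasurableSet A) (y : Y) :
    ∫ x, A.indicator (fun z => h z.2) (x, y) ∂μ = μ.real {x | (x, y) ∈ A} * h y := by
  have hsec : MeasurableSet {x | (x, y) ∈ A} := measurable_prodMk_right hA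
  rw [← smul_eq_mul, ← integral_indicator_const _ hsec]
  rfl

lemma integrable_indicator_comp_snd [IsFiniteMeasure μ] [SFinite lam] (hA : MeasurableSet A)
    (hh : Integrable h lam) : Integrable (A.indicator fun z => h z.2) (μ.prod lam) :=
  (hh.comp_snd μ).indicator hA

lemma integrable_measureReal_section_mul [IsFiniteMeasure μ] [SFinite lam]
    (hA : MeasurableSet A) (hh : Integrable h lam) :
    Integrable (fun y => μ.real {x | (x, y) ∈ A} * h y) lam := by
  simpa only [integral_indicator_comp_snd_eq hA] using
    (integrable_indicator_comp_snd hA hh).integral_prod_right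

theorem integral_integral_indicator_section [IsFiniteMeasure μ] [SFinite lam]
    (hA : MeasurableSet A) (hh : Integrable h lam) :
    ∫ x, ∫ y, {y | (x, y) ∈ A}.indicator h y ∂lam ∂μ =
      ∫ y, μ.real {x | (x, y) ∈ A} * h y ∂lam := by
  simp_rw [← integral_indicator_comp_snd_eq hA]
  exact integral_integral_swap (integrable_indicator_comp_snd hA hh)

theorem integral_integral_indicator_section_sub [IsFiniteMeasure μ] {ν : Measure X}
    [IsFiniteMeasure ν] [SFinite lam] (hA : MeasurableSet A) (hh : Integrable h lam) :
    (∫ x, ∫ y, {y | (x, y) ∈ A}.indicator h y ∂lam ∂μ) -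
        ∫ x, ∫ y, {y | (x, y) ∈ A}.indicator h y ∂lam ∂ν =
      ∫ y, (μ.real {x | (x, y) ∈ A} - ν.real {x | (x, y) ∈ A}) * h y ∂lam := by
  rw [integral_integral_indicator_section hA hh, integral_integral_indicator_section hA hh,
    ← integral_sub (integrable_measureReal_section_mul hA hh)
      (integrable_measureReal_section_mul hA hh)]
  simp_rw [sub_mul]

end Sections

theorem sup_dual_eq_section_Lp_norm_general
    {X Y : Type*} [MeasurableSpace X] [MeasurableSpace Y]
    (lam : Measure Y) [IsFiniteMeasure lam]
    (A : Set (X × Y)) (hA : MeasurableSet A)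
    (p : ℝ)
    (p' : ℝ≥0∞)
    (hconj : 1 / ENNReal.ofReal p + 1 / p' = 1)
    (μ ν : Measure X) [IsProbabilityMeasure μ] [IsProbabilityMeasure ν] :
    sSup {r : ℝ | ∃ h : Y → ℝ, Measurable h ∧ eLpNorm h p' lam ≤ 1 ∧
        r = (∫ x, ∫ y, ({y : Y | (x, y) ∈ A}.indicator h) y ∂lam ∂μ) -
            ∫ x, ∫ y, ({y : Y | (x, y) ∈ A}.indicator h) y ∂lam ∂ν} =
      (∫ y, |(μ {x : X | (x, y) ∈ A}).toReal - (ν {x : X | (x, y) ∈ A}).toReal| ^ p ∂lam)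
        ^ (1 / p) := by
  have hpq : (ENNReal.ofReal p).HolderConjugate p' :=
    holderConjugate_iff.mpr (by simpa only [one_div] using hconj)
  have hp1 : 1 ≤ p := one_le_ofReal.mp (HolderConjugate.one_le _ p')
  set g : Y → ℝ := fun y => μ.real {x | (x, y) ∈ A} - ν.real {x | (x, y) ∈ A}
  have hgm : Measurable g :=
    (measurable_measure_prodMk_right hA).ennreal_toReal.sub
      (measurable_measure_prodMk_right hA).ennreal_toReal
  have hg : MemLp g (ENNReal.ofReal p) lam :=
    .of_bound hgm.aestronglyMeasurable 1 (.of_forall fun y =>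
      abs_sub_le_of_nonneg_of_le measureReal_nonneg measureReal_le_one
        measureReal_nonneg measureReal_le_one)
  refine (congrArg sSup (Set.ext fun r => ?_)).trans
    ((isGreatest_integral_mul_lpNorm (q := p') ofReal_ne_top hgm hg).csSup_eq.trans ?_)
  · refine exists_congr fun h => and_congr_right fun hm => and_congr_right fun h_le => ?_
    have hh : Integrable h lam :=
      MemLp.integrable (HolderConjugate.one_le p' (ENNReal.ofReal p))
        ⟨hm.aestronglyMeasurable, h_le.trans_lt one_lt_top⟩
    rw [integral_integral_indicator_section_sub hA hh]
  · rw [lpNorm_eq_integral_norm_rpow_toReal (HolderConjugate.ne_zero _ p') ofReal_ne_top hg.1,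
      toReal_ofReal (zero_le_one.trans hp1)]
    simp only [Real.norm_eq_abs, one_div]
    rfl

/-- Closed-form formula (abstract form): the supremum of `∫ f_h dμ - ∫ f_h dν` over measurable
`h` with `‖h‖_{L^{p'}} ≤ 1`, where `f_h x = ∫ 1_A(x,y) h(y) dλ(y)`, equals
`(∫ |μ(A_y) - ν(A_y)|^p dλ(y))^{1/p}`. -/
theorem sup_dual_eq_section_Lp_norm
    {X Y : Type*} [MeasurableSpace X] [MeasurableSpace Y]
    (lam : Measure Y) [IsFiniteMeasure lam]
    (A : Set (X × Y)) (hA : MeasurableSet A)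
    (p : ℝ) (hp : 1 ≤ p)
    (p' : ℝ≥0∞) (hp' : 1 < p')
    (hconj : 1 / ENNReal.ofReal p + 1 / p' = 1)
    (μ ν : Measure X) [IsProbabilityMeasure μ] [IsProbabilityMeasure ν] :
    sSup {r : ℝ | ∃ h : Y → ℝ, Measurable h ∧ eLpNorm h p' lam ≤ 1 ∧
        r = (∫ x, ∫ y, ({y : Y | (x, y) ∈ A}.indicator h) y ∂lam ∂μ) -
            ∫ x, ∫ y, ({y : Y | (x, y) ∈ A}.indicator h) y ∂lam ∂ν} =
      (∫ y, |(μ {x : X | (x, y) ∈ A}).toReal - (ν {x : X | (x, y) ∈ A}).toReal| ^ p ∂lam)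
        ^ (1 / p) :=
  sup_dual_eq_section_Lp_norm_general lam A hA p p' hconj μ ν
end

section
/- Let X and Y be measurable spaces, let λ be a finite nonnegative measure on Y, and let A ⊆ X × Y be a measurable set. For 1 ≤ p ≤ ∞ with conjugate exponent p′ (1/p + 1/p′ = 1), define, for Borel probability measures μ, ν on X, D_p(μ, ν) := sup { ∫_X f_h dμ − ∫_X f_h dν : h measurable, ‖h‖_{L^{p′}(Y, λ)} ≤ 1 }, where f_h(x) := ∫_Y 1_A(x, y) h(y) λ(dy). Then for any 1 ≤ p < q ≤ ∞ with conjugate exponents q′ < p′, one has D_p(μ, ν) ≤ λ(Y)^{1/q′ − 1/p′} · D_q(μ, ν). -/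
/-!
Hölder's inequality on the finite measure space `(Y, λ)` gives
`‖h‖_{q'} ≤ λ(Y)^{1/q' - 1/p'} ‖h‖_{p'}` for `q' ≤ p'`. Hence dividing a competitor `h` for `D_p`
by `c = λ(Y)^{1/q' - 1/p'}` yields a competitor for `D_q`, and since
`h ↦ ∫ f_h dμ - ∫ f_h dν` is linear, every value in the supremum defining `D_p` is at most `c`
times a value in the supremum defining `D_q`. That supremum is finite because
`|f_h| ≤ ‖h‖_{L¹} ≤ λ(Y)^{1 - 1/q'} ‖h‖_{q'}` on a finite measure space with `q' ≥ 1`.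
-/

open MeasureTheory ENNReal

namespace SectionTransport

variable {X Y : Type*} [MeasurableSpace Y] (lam : Measure Y) (A : Set (X × Y))

noncomputable def sectionIntegral (h : Y → ℝ) (x : X) : ℝ :=
  ∫ y, ({y : Y | (x, y) ∈ A}.indicator h) y ∂lam

variable {lam A}

lemma sectionIntegral_smul (c : ℝ) (h : Y → ℝ) (x : X) :
    sectionIntegral lam A (c • h) x = c * sectionIntegral lam A h x := by
  rw [sectionIntegral, sectionIntegral, ← smul_eq_mul, ← integral_smul,
    ← Set.indicator_const_smul]
  rfl

lemma sectionIntegral_eq_zero_of_ae_eq_zero {h : Y → ℝ} (h0 : h =ᵐ[lam] 0) (x : X) :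
    sectionIntegral lam A h x = 0 :=
  integral_eq_zero_of_ae <| h0.mono fun y hy => by simp [hy]

lemma abs_sectionIntegral_le {h : Y → ℝ} (hh : Integrable h lam) (x : X) :
    |sectionIntegral lam A h x| ≤ ∫ y, |h y| ∂lam :=
  abs_integral_le_integral_abs.trans <| integral_mono_of_nonneg
    (.of_forall fun _ => abs_nonneg _) hh.abs (.of_forall fun y => by
      simpa only [Real.norm_eq_abs] using norm_indicator_le_norm_self h y)

lemma integral_abs_le_of_eLpNorm_le_one [IsFiniteMeasure lam] {r : ℝ≥0∞} (hr : 1 ≤ r)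
    {h : Y → ℝ} (hh : AEStronglyMeasurable h lam) (hnorm : eLpNorm h r lam ≤ 1) :
    ∫ y, |h y| ∂lam ≤ (lam Set.univ ^ (1 - 1 / r.toReal)).toReal := by
  have hexp : 0 ≤ 1 - 1 / r.toReal := by
    rw [sub_nonneg, one_div, ← toReal_inv]
    exact toReal_le_of_le_ofReal zero_le_one (by simpa using ENNReal.inv_le_one.2 hr)
  have hL1 : eLpNorm h 1 lam ≤ lam Set.univ ^ (1 - 1 / r.toReal) := by
    simpa using (eLpNorm_le_eLpNorm_mul_rpow_measure_univ hr hh).trans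
      (mul_le_of_le_one_left' hnorm)
  calc ∫ y, |h y| ∂lam = (eLpNorm h 1 lam).toReal := by
        rw [eLpNorm_one_eq_lintegral_enorm, ← integral_norm_eq_lintegral_enorm hh]
        rfl
    _ ≤ _ := toReal_mono (rpow_ne_top_of_nonneg hexp (measure_ne_top _ _)) hL1

variable [MeasurableSpace X] (lam A)

noncomputable def gap (μ ν : Measure X) (h : Y → ℝ) : ℝ :=
  ∫ x, sectionIntegral lam A h x ∂μ - ∫ x, sectionIntegral lam A h x ∂ν

/-- The paper's `D_p(μ, ν)` is `sSup (gapSet lam A p' μ ν)`, indexed by the dual exponent. -/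
def gapSet (r : ℝ≥0∞) (μ ν : Measure X) : Set ℝ :=
  {t | ∃ h : Y → ℝ, Measurable h ∧ eLpNorm h r lam ≤ 1 ∧ t = gap lam A μ ν h}

variable {lam A} (μ ν : Measure X)

lemma gap_smul (c : ℝ) (h : Y → ℝ) : gap lam A μ ν (c • h) = c * gap lam A μ ν h := by
  simp only [gap, sectionIntegral_smul, integral_const_mul, mul_sub]

lemma gap_le [IsFiniteMeasure μ] [IsFiniteMeasure ν] {h : Y → ℝ} (hh : Integrable h lam) :
    gap lam A μ ν h ≤ (∫ y, |h y| ∂lam) * (μ.real Set.univ + ν.real Set.univ) := by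
  have bound (m : Measure X) [IsFiniteMeasure m] :
      |∫ x, sectionIntegral lam A h x ∂m| ≤ (∫ y, |h y| ∂lam) * m.real Set.univ :=
    norm_integral_le_of_norm_le_const <| .of_forall fun x =>
      (Real.norm_eq_abs _).trans_le (abs_sectionIntegral_le hh x)
  have hμ := (abs_le.mp (bound μ)).2
  have hν := (abs_le.mp (bound ν)).1
  rw [gap]
  linarith

lemma zero_mem_gapSet (r : ℝ≥0∞) : (0 : ℝ) ∈ gapSet lam A r μ ν :=
  ⟨0, measurable_const, by simp, by simp [gap, sectionIntegral]⟩

lemma bddAbove_gapSet [IsFiniteMeasure lam] [IsFiniteMeasure μ] [IsFiniteMeasure ν]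
    {r : ℝ≥0∞} (hr : 1 ≤ r) : BddAbove (gapSet lam A r μ ν) := by
  refine ⟨(lam Set.univ ^ (1 - 1 / r.toReal)).toReal * (μ.real Set.univ + ν.real Set.univ), ?_⟩
  rintro _ ⟨h, hm, hn, rfl⟩
  have hint : Integrable h lam :=
    MemLp.integrable hr ⟨hm.aestronglyMeasurable, hn.trans_lt one_lt_top⟩
  exact (gap_le μ ν hint).trans <| mul_le_mul_of_nonneg_right
    (integral_abs_le_of_eLpNorm_le_one hr hm.aestronglyMeasurable hn) (by positivity)

theorem sSup_gapSet_le_mul [IsFiniteMeasure lam] [IsFiniteMeasure μ] [IsFiniteMeasure ν]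
    {p' q' C : ℝ≥0∞} (hq' : 1 ≤ q') (hC : C ≠ ∞)
    (hball : ∀ h : Y → ℝ, Measurable h → eLpNorm h p' lam ≤ 1 → eLpNorm h q' lam ≤ C) :
    sSup (gapSet lam A p' μ ν) ≤ C.toReal * sSup (gapSet lam A q' μ ν) := by
  refine csSup_le ⟨0, zero_mem_gapSet μ ν p'⟩ ?_
  rintro _ ⟨h, hm, hn, rfl⟩
  obtain hC0 | hCpos := (toReal_nonneg (a := C)).eq_or_lt
  · have hnorm0 : eLpNorm h q' lam = 0 := by
      simpa [(toReal_eq_zero_iff C).1 hC0.symm |>.resolve_right hC] using hball h hm hn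
    have h0 : h =ᵐ[lam] 0 :=
      (eLpNorm_eq_zero_iff hm.aestronglyMeasurable (one_pos.trans_le hq').ne').1 hnorm0
    simp [gap, sectionIntegral_eq_zero_of_ae_eq_zero h0, ← hC0]
  set c := C.toReal
  have hscaled : c⁻¹ * gap lam A μ ν h ∈ gapSet lam A q' μ ν := by
    refine ⟨c⁻¹ • h, hm.const_smul _, ?_, (gap_smul μ ν _ h).symm⟩
    calc eLpNorm (c⁻¹ • h) q' lam = ‖c⁻¹‖ₑ * eLpNorm h q' lam := eLpNorm_const_smul _ _ _ _
      _ ≤ ‖c⁻¹‖ₑ * C := by gcongr; exact hball h hm hn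
      _ = 1 := by
        rw [Real.enorm_eq_ofReal_abs, abs_inv, abs_of_pos hCpos, ofReal_inv_of_pos hCpos,
          ofReal_toReal hC, ENNReal.inv_mul_cancel (toReal_pos_iff.1 hCpos).1.ne' hC]
  calc gap lam A μ ν h = c * (c⁻¹ * gap lam A μ ν h) := by field_simp
    _ ≤ c * sSup (gapSet lam A q' μ ν) :=
      mul_le_mul_of_nonneg_left (le_csSup (bddAbove_gapSet μ ν hq') hscaled) hCpos.le

end SectionTransport

theorem Dp_le_Dq_comparison_general
    {X Y : Type*} [MeasurableSpace X] [MeasurableSpace Y]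
    (lam : Measure Y) [IsFiniteMeasure lam]
    (A : Set (X × Y))
    (q p' q' : ℝ≥0∞)
    (hconjq : 1 / q + 1 / q' = 1)
    (hq'p' : q' < p')
    (μ ν : Measure X) [IsProbabilityMeasure μ] [IsProbabilityMeasure ν]
    (Dp Dq : ℝ)
    (hDp : Dp = sSup {r : ℝ | ∃ h : Y → ℝ, Measurable h ∧ eLpNorm h p' lam ≤ 1 ∧
        r = (∫ x, ∫ y, ({y : Y | (x, y) ∈ A}.indicator h) y ∂lam ∂μ) -
            ∫ x, ∫ y, ({y : Y | (x, y) ∈ A}.indicator h) y ∂lam ∂ν})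
    (hDq : Dq = sSup {r : ℝ | ∃ h : Y → ℝ, Measurable h ∧ eLpNorm h q' lam ≤ 1 ∧
        r = (∫ x, ∫ y, ({y : Y | (x, y) ∈ A}.indicator h) y ∂lam ∂μ) -
            ∫ x, ∫ y, ({y : Y | (x, y) ∈ A}.indicator h) y ∂lam ∂ν}) :
    Dp ≤ (lam Set.univ).toReal ^ ((1 / q').toReal - (1 / p').toReal) * Dq := by
  have : HolderConjugate q q' := holderConjugate_iff.mpr (by simpa only [one_div] using hconjq)
  have hq' : 1 ≤ q' := HolderConjugate.one_le q' q
  have he : 0 ≤ (1 / q').toReal - (1 / p').toReal := sub_nonneg.2 <|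
    toReal_mono (by simpa using HolderConjugate.ne_zero q' q) (ENNReal.div_le_div_left hq'p'.le 1)
  have hball (h : Y → ℝ) (hm : Measurable h) (hn : eLpNorm h p' lam ≤ 1) :
      eLpNorm h q' lam ≤ lam Set.univ ^ ((1 / q').toReal - (1 / p').toReal) := by
    simpa only [one_div, toReal_inv] using
      (eLpNorm_le_eLpNorm_mul_rpow_measure_univ hq'p'.le hm.aestronglyMeasurable).trans
        (mul_le_of_le_one_left' hn)
  rw [hDp, hDq, toReal_rpow]
  exact SectionTransport.sSup_gapSet_le_mul μ ν hq' (rpow_ne_top_of_nonneg he (measure_ne_top _ _)) hball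

/-- Upper bound comparison between the transport-type distances `D_p` and `D_q` for
`1 ≤ p < q ≤ ∞`: `D_p(μ,ν) ≤ λ(Y)^{1/q' - 1/p'} D_q(μ,ν)`. -/
theorem Dp_le_Dq_comparison
    {X Y : Type*} [MeasurableSpace X] [MeasurableSpace Y]
    (lam : Measure Y) [IsFiniteMeasure lam]
    (A : Set (X × Y)) (hA : MeasurableSet A)
    (p q p' q' : ℝ≥0∞)
    (hp : 1 ≤ p) (hpq : p < q)
    (hconjp : 1 / p + 1 / p' = 1) (hconjq : 1 / q + 1 / q' = 1)
    (hq'p' : q' < p')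
    (μ ν : Measure X) [IsProbabilityMeasure μ] [IsProbabilityMeasure ν]
    (Dp Dq : ℝ)
    (hDp : Dp = sSup {r : ℝ | ∃ h : Y → ℝ, Measurable h ∧ eLpNorm h p' lam ≤ 1 ∧
        r = (∫ x, ∫ y, ({y : Y | (x, y) ∈ A}.indicator h) y ∂lam ∂μ) -
            ∫ x, ∫ y, ({y : Y | (x, y) ∈ A}.indicator h) y ∂lam ∂ν})
    (hDq : Dq = sSup {r : ℝ | ∃ h : Y → ℝ, Measurable h ∧ eLpNorm h q' lam ≤ 1 ∧
        r = (∫ x, ∫ y, ({y : Y | (x, y) ∈ A}.indicator h) y ∂lam ∂μ) -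
            ∫ x, ∫ y, ({y : Y | (x, y) ∈ A}.indicator h) y ∂lam ∂ν}) :
    Dp ≤ (lam Set.univ).toReal ^ ((1 / q').toReal - (1 / p').toReal) * Dq :=
  Dp_le_Dq_comparison_general lam A q p' q' hconjq hq'p' μ ν Dp Dq hDp hDq
end

section
/- Let 1 ≤ p ≤ 2. Then the kernel k(a, b) := |a − b|^p on ℝ is negative definite: for every integer n ≥ 1, all a_1, …, a_n ∈ ℝ and all c_1, …, c_n ∈ ℝ with ∑_{i=1}^n c_i = 0, one has ∑_{i=1}^n ∑_{j=1}^n c_i c_j |a_i − a_j|^p ≤ 0. -/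
/-!
For `0 < p < 2`, substituting `u = |x| t` gives
`∫₀^∞ (1 - cos (x t)) t ^ (-1 - p) dt = |x| ^ p ∫₀^∞ (1 - cos u) u ^ (-1 - p) du`,
with a finite positive constant on the right. Each kernel `(a, b) ↦ 1 - cos ((a - b) t)` is
negative definite because `∑ cᵢ cⱼ cos (xᵢ - xⱼ) = (∑ cᵢ cos xᵢ)² + (∑ cᵢ sin xᵢ)² ≥ 0`, and
negative definiteness survives integration against a positive measure. At `p = 2`, directly,
`∑ cᵢ cⱼ (aᵢ - aⱼ)² = -2 (∑ cᵢ aᵢ)²` when `∑ cᵢ = 0`.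
-/

open MeasureTheory Real Set

def IsNegDefFun (ψ : ℝ → ℝ) : Prop :=
  ∀ (n : ℕ) (a c : Fin n → ℝ), ∑ i, c i = 0 → ∑ i, ∑ j, c i * c j * ψ (a i - a j) ≤ 0

namespace IsNegDefFun

variable {ψ : ℝ → ℝ}

lemma mul_const (h : IsNegDefFun ψ) {r : ℝ} (hr : 0 ≤ r) : IsNegDefFun fun x => ψ x * r := by
  intro n a c hc
  calc ∑ i, ∑ j, c i * c j * (ψ (a i - a j) * r)
      = (∑ i, ∑ j, c i * c j * ψ (a i - a j)) * r := by simp only [Finset.sum_mul, mul_assoc]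
    _ ≤ 0 := mul_nonpos_of_nonpos_of_nonneg (h n a c hc) hr

lemma of_mul_const {r : ℝ} (h : IsNegDefFun fun x => ψ x * r) (hr : 0 < r) : IsNegDefFun ψ := by
  simpa only [mul_inv_cancel_right₀ hr.ne'] using h.mul_const (inv_nonneg.2 hr.le)

lemma integral {α : Type*} [MeasurableSpace α] {μ : Measure α} {g : ℝ → α → ℝ}
    (hg : ∀ᵐ t ∂μ, IsNegDefFun (g · t)) (hint : ∀ x, Integrable (g x) μ) :
    IsNegDefFun fun x => ∫ t, g x t ∂μ := by
  intro n a c hc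
  have hint' : ∀ i j, Integrable (fun t => c i * c j * g (a i - a j) t) μ :=
    fun i j => (hint _).const_mul _
  calc ∑ i, ∑ j, c i * c j * ∫ t, g (a i - a j) t ∂μ
      = ∫ t, ∑ i, ∑ j, c i * c j * g (a i - a j) t ∂μ := by
        rw [integral_finsetSum _ fun i _ => integrable_finsetSum _ fun j _ => hint' i j]
        simp only [integral_finsetSum _ fun j _ => hint' _ j, integral_const_mul]
    _ ≤ 0 := integral_nonpos_of_ae (hg.mono fun t ht => ht n a c hc)

end IsNegDefFun

lemma sum_sum_mul_cos_sub_eq {ι : Type*} [Fintype ι] (c x : ι → ℝ) :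
    ∑ i, ∑ j, c i * c j * cos (x i - x j)
      = (∑ i, c i * cos (x i)) ^ 2 + (∑ i, c i * sin (x i)) ^ 2 := by
  simp only [sq, Finset.sum_mul_sum, ← Finset.sum_add_distrib, cos_sub]
  congr! 2
  ring

lemma isNegDefFun_one_sub_cos_mul (t : ℝ) : IsNegDefFun fun x => 1 - cos (x * t) := by
  intro n a c hc
  have hcos := sum_sum_mul_cos_sub_eq c (a · * t)
  simp only [← sub_mul] at hcos
  simp only [mul_sub, mul_one, Finset.sum_sub_distrib, ← Finset.sum_mul_sum, hc, zero_mul, hcos]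
  nlinarith [sq_nonneg (∑ i, c i * cos (a i * t)), sq_nonneg (∑ i, c i * sin (a i * t))]

lemma isNegDefFun_sq : IsNegDefFun (· ^ 2) := by
  intro n a c hc
  have hexp : ∑ i, ∑ j, c i * c j * (a i - a j) ^ 2
      = (∑ i, c i * a i ^ 2) * (∑ j, c j) + (∑ i, c i) * (∑ j, c j * a j ^ 2)
        - 2 * ((∑ i, c i * a i) * (∑ j, c j * a j)) := by
    simp only [Finset.sum_mul_sum, Finset.mul_sum (a := (2 : ℝ)), ← Finset.sum_add_distrib,
      ← Finset.sum_sub_distrib]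
    congr! 2
    ring
  rw [hexp, hc]
  nlinarith [sq_nonneg (∑ i, c i * a i)]

noncomputable def stableIntegrand (p x t : ℝ) : ℝ := (1 - cos (x * t)) * t ^ (-1 - p)

lemma stableIntegrand_nonneg (p x : ℝ) {t : ℝ} (ht : 0 ≤ t) : 0 ≤ stableIntegrand p x t :=
  mul_nonneg (sub_nonneg.2 (cos_le_one _)) (rpow_nonneg ht _)

lemma continuousOn_stableIntegrand (p x : ℝ) : ContinuousOn (stableIntegrand p x) (Ioi 0) := by
  unfold stableIntegrand
  exact ContinuousOn.mul (by fun_prop) (continuousOn_id.rpow_const fun t ht => .inl (ne_of_gt ht))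

lemma integrableOn_stableIntegrand {p : ℝ} (hp0 : 0 < p) (hp2 : p < 2) (x : ℝ) :
    IntegrableOn (stableIntegrand p x) (Ioi 0) := by
  have hmeas : ∀ s ⊆ Ioi (0 : ℝ), MeasurableSet s →
      AEStronglyMeasurable (stableIntegrand p x) (volume.restrict s) := fun s hs hsm =>
    ((continuousOn_stableIntegrand p x).mono hs).aestronglyMeasurable hsm
  rw [← Ioc_union_Ioi_eq_Ioi zero_le_one]
  refine IntegrableOn.union ?_ ?_
  · -- near `0`, `1 - cos (x t) ≤ (x t) ^ 2 / 2`
    have hrpow := intervalIntegral.intervalIntegrable_rpow' (a := 0) (b := 1)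
      (by linarith : -1 < 1 - p)
    refine Integrable.mono' (hrpow.1.const_mul (x ^ 2 / 2))
      (hmeas _ Ioc_subset_Ioi_self measurableSet_Ioc) ?_
    refine (ae_restrict_iff' measurableSet_Ioc).2 (.of_forall fun t ht => ?_)
    rw [Real.norm_of_nonneg (stableIntegrand_nonneg p x ht.1.le), stableIntegrand,
      show 1 - p = 2 + (-1 - p) by ring, rpow_add ht.1, rpow_two, ← mul_assoc]
    refine mul_le_mul_of_nonneg_right ?_ (rpow_nonneg ht.1.le _)
    nlinarith [one_sub_sq_div_two_le_cos (x := x * t)]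
  · refine Integrable.mono' ((integrableOn_Ioi_rpow_of_lt (by linarith : -1 - p < -1)
      one_pos).const_mul 2) (hmeas _ (Ioi_subset_Ioi zero_le_one) measurableSet_Ioi) ?_
    refine (ae_restrict_iff' measurableSet_Ioi).2 (.of_forall fun t (ht : 1 < t) => ?_)
    rw [Real.norm_of_nonneg (stableIntegrand_nonneg p x (by linarith)), stableIntegrand]
    refine mul_le_mul_of_nonneg_right ?_ (rpow_nonneg (by linarith) _)
    linarith [neg_one_le_cos (x * t)]

lemma integral_stableIntegrand_one_pos {p : ℝ} (hp0 : 0 < p) (hp2 : p < 2) :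
    0 < ∫ t in Ioi 0, stableIntegrand p 1 t := by
  have hint := integrableOn_stableIntegrand hp0 hp2 1
  have hpos : 0 < ∫ t in (0)..π, stableIntegrand p 1 t := by
    refine intervalIntegral.intervalIntegral_pos_of_pos_on
      ((intervalIntegrable_iff_integrableOn_Ioc_of_le pi_pos.le).2
        (hint.mono_set Ioc_subset_Ioi_self)) (fun t ht => ?_) pi_pos
    have hcos : cos t < 1 := by
      simpa using cos_lt_cos_of_nonneg_of_le_pi le_rfl ht.2.le ht.1
    exact mul_pos (by rw [one_mul]; linarith) (rpow_pos_of_pos ht.1 _)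
  rw [intervalIntegral.integral_of_le pi_pos.le] at hpos
  refine hpos.trans_le (setIntegral_mono_set hint ?_ Ioc_subset_Ioi_self.eventuallyLE)
  filter_upwards [ae_restrict_mem measurableSet_Ioi] with t ht
  exact stableIntegrand_nonneg p 1 (le_of_lt ht)

lemma integral_stableIntegrand {p : ℝ} (hp : p ≠ 0) (x : ℝ) :
    ∫ t in Ioi 0, stableIntegrand p x t = |x| ^ p * ∫ t in Ioi 0, stableIntegrand p 1 t := by
  rcases eq_or_ne x 0 with rfl | hx
  · simp [stableIntegrand, zero_rpow hp]
  have hb : 0 < |x| := abs_pos.2 hx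
  have hscale : ∀ t ∈ Ioi (0 : ℝ),
      stableIntegrand p x t = |x| ^ (1 + p) * stableIntegrand p 1 (|x| * t) := fun t ht => by
    rw [stableIntegrand, stableIntegrand, one_mul, mul_rpow hb.le (le_of_lt ht),
      ← cos_abs (x * t), abs_mul, abs_of_pos (show (0:ℝ) < t from ht)]
    rw [show |x| ^ (1 + p) * ((1 - cos (|x| * t)) * (|x| ^ (-1 - p) * t ^ (-1 - p)))
      = (|x| ^ (1 + p) * |x| ^ (-1 - p)) * ((1 - cos (|x| * t)) * t ^ (-1 - p)) by ring,
      ← rpow_add hb]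
    simp
  calc ∫ t in Ioi 0, stableIntegrand p x t
      = ∫ t in Ioi 0, |x| ^ (1 + p) * stableIntegrand p 1 (|x| * t) :=
        setIntegral_congr_fun measurableSet_Ioi hscale
    _ = |x| ^ (1 + p) * |x|⁻¹ * ∫ t in Ioi 0, stableIntegrand p 1 t := by
        rw [integral_const_mul, integral_comp_mul_left_Ioi _ _ hb, mul_zero, smul_eq_mul,
          mul_assoc]
    _ = |x| ^ p * ∫ t in Ioi 0, stableIntegrand p 1 t := by
        rw [← rpow_neg_one, ← rpow_add hb, add_neg_cancel_comm]

lemma isNegDefFun_abs_rpow_of_lt_two {p : ℝ} (hp0 : 0 < p) (hp2 : p < 2) :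
    IsNegDefFun fun x => |x| ^ p := by
  have hcos : ∀ᵐ t ∂volume.restrict (Ioi 0), IsNegDefFun (stableIntegrand p · t) := by
    filter_upwards [ae_restrict_mem measurableSet_Ioi] with t ht
    exact (isNegDefFun_one_sub_cos_mul t).mul_const (rpow_nonneg (le_of_lt ht) _)
  have h := IsNegDefFun.integral hcos (integrableOn_stableIntegrand hp0 hp2)
  rw [funext (integral_stableIntegrand hp0.ne')] at h
  exact h.of_mul_const (integral_stableIntegrand_one_pos hp0 hp2)

lemma isNegDefFun_abs_rpow {p : ℝ} (hp0 : 0 < p) (hp2 : p ≤ 2) :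
    IsNegDefFun fun x => |x| ^ p := by
  rcases hp2.lt_or_eq with hp2 | rfl
  · exact isNegDefFun_abs_rpow_of_lt_two hp0 hp2
  · simpa only [rpow_two, sq_abs] using isNegDefFun_sq

/-- For `1 ≤ p ≤ 2`, the kernel `(a, b) ↦ |a - b|^p` on `ℝ` is negative definite. -/
theorem abs_sub_rpow_negative_definite
    (p : ℝ) (hp1 : 1 ≤ p) (hp2 : p ≤ 2) :
    ∀ (n : ℕ), 1 ≤ n → ∀ (a c : Fin n → ℝ), (∑ i, c i) = 0 →
      ∑ i, ∑ j, c i * c j * |a i - a j| ^ p ≤ 0 := fun n _ =>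
  isNegDefFun_abs_rpow (by linarith) hp2 n
end

section
/- Let 1 ≤ p ≤ 2, let m be a positive integer, and let w_1, …, w_m ≥ 0 be nonnegative reals. Then the weighted ℓ_p distance d(x, z) := ( ∑_{e=1}^m w_e |x_e − z_e|^p )^{1/p} on ℝ^m is negative definite: for every integer n ≥ 1, all x^{(1)}, …, x^{(n)} ∈ ℝ^m and all c_1, …, c_n ∈ ℝ with ∑_{i=1}^n c_i = 0, one has ∑_{i=1}^n ∑_{j=1}^n c_i c_j ( ∑_{e=1}^m w_e |x^{(i)}_e − x^{(j)}_e|^p )^{1/p} ≤ 0. -/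
/-!
For `0 < p < 2`, `|b| ^ p` is a positive multiple of `∫₀^∞ (1 - cos (b u)) u ^ (-p - 1) du`, and
`cos (s u - t u) = cos (s u) cos (t u) + sin (s u) sin (t u)` is a positive definite kernel in
`(s, t)`; hence `|s - t| ^ p` is negative definite (for `p = 2` expand `(s - t) ^ 2`), and so is the
weighted sum `k x z = ∑ e, w e * |x e - z e| ^ p`. By Schoenberg's theorem, proved from the Schur
product theorem and the exponential series, `exp (-u k)` is positive definite for every `u ≥ 0`.
Finally, for `0 < r < 1`, `k ^ r` is a positive multiple of `∫₀^∞ (1 - exp (-u k)) u ^ (-r - 1) du`,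
so it is negative definite too; take `r = 1 / p`.
-/

variable {α β : Type*}

/-- Symmetry is part of the definition, so that Gram matrices are `Matrix.PosSemidef`. -/
structure IsPosDefKernel (k : α → α → ℝ) : Prop where
  symm : ∀ x y, k x y = k y x
  sum_mul_nonneg : ∀ (n : ℕ) (x : Fin n → α) (c : Fin n → ℝ),
    0 ≤ ∑ i, ∑ j, c i * c j * k (x i) (x j)

def IsNegDefKernel (k : α → α → ℝ) : Prop :=
  ∀ (n : ℕ) (x : Fin n → α) (c : Fin n → ℝ), ∑ i, c i = 0 →
    ∑ i, ∑ j, c i * c j * k (x i) (x j) ≤ 0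

section KernelAlgebra

open Finset Matrix

theorem Matrix.dotProduct_mulVec_self_eq_sum_sum {ι : Type*} [Fintype ι] (M : Matrix ι ι ℝ)
    (c : ι → ℝ) : c ⬝ᵥ (M *ᵥ c) = ∑ i, ∑ j, c i * c j * M i j := by
  simp only [dotProduct, Matrix.mulVec, Finset.mul_sum]
  exact sum_congr rfl fun i _ => sum_congr rfl fun j _ => by ring

theorem sum_sum_mul_mul_left {ι : Type*} [Fintype ι] (c f : ι → ℝ) :
    ∑ i, ∑ j, c i * c j * f i = (∑ i, c i * f i) * ∑ j, c j := by
  rw [sum_mul_sum]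
  exact sum_congr rfl fun i _ => sum_congr rfl fun j _ => by ring

theorem sum_sum_mul_mul_right {ι : Type*} [Fintype ι] (c f : ι → ℝ) :
    ∑ i, ∑ j, c i * c j * f j = (∑ i, c i) * ∑ j, c j * f j := by
  rw [sum_mul_sum]
  exact sum_congr rfl fun i _ => sum_congr rfl fun j _ => by ring

theorem isPosDefKernel_mul_self (f : α → ℝ) : IsPosDefKernel fun x y => f x * f y := by
  refine ⟨fun x y => mul_comm _ _, fun n x c => ?_⟩
  have : ∑ i, ∑ j, c i * c j * (f (x i) * f (x j)) = (∑ i, c i * f (x i)) ^ 2 := by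
    rw [sq, sum_mul_sum]
    exact sum_congr rfl fun i _ => sum_congr rfl fun j _ => by ring
  exact this ▸ sq_nonneg _

namespace IsPosDefKernel

variable {k l : α → α → ℝ}

theorem posSemidef (hk : IsPosDefKernel k) {n : ℕ} (x : Fin n → α) :
    (Matrix.of fun i j => k (x i) (x j)).PosSemidef := by
  refine Matrix.posSemidef_iff_dotProduct_mulVec.mpr ⟨?_, fun c => ?_⟩
  · ext i j
    exact hk.symm (x j) (x i)
  · simpa only [star_trivial, Matrix.dotProduct_mulVec_self_eq_sum_sum, Matrix.of_apply]
      using hk.sum_mul_nonneg n x c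

theorem comp (hk : IsPosDefKernel k) (f : β → α) : IsPosDefKernel fun x y => k (f x) (f y) :=
  ⟨fun x y => hk.symm (f x) (f y), fun n x c => hk.sum_mul_nonneg n (f ∘ x) c⟩

theorem add (hk : IsPosDefKernel k) (hl : IsPosDefKernel l) :
    IsPosDefKernel fun x y => k x y + l x y := by
  refine ⟨fun x y => by rw [hk.symm, hl.symm], fun n x c => ?_⟩
  simp only [mul_add, sum_add_distrib]
  exact add_nonneg (hk.sum_mul_nonneg n x c) (hl.sum_mul_nonneg n x c)

theorem const_mul (hk : IsPosDefKernel k) {t : ℝ} (ht : 0 ≤ t) :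
    IsPosDefKernel fun x y => t * k x y := by
  refine ⟨fun x y => by rw [hk.symm], fun n x c => ?_⟩
  simp only [mul_left_comm _ t, ← mul_sum]
  exact mul_nonneg ht (hk.sum_mul_nonneg n x c)

theorem mul (hk : IsPosDefKernel k) (hl : IsPosDefKernel l) :
    IsPosDefKernel fun x y => k x y * l x y := by
  refine ⟨fun x y => by rw [hk.symm, hl.symm], fun n x c => ?_⟩
  simpa only [star_trivial, Matrix.dotProduct_mulVec_self_eq_sum_sum, Matrix.hadamard_apply,
    Matrix.of_apply] using ((hk.posSemidef x).hadamard (hl.posSemidef x)).dotProduct_mulVec_nonneg c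

theorem pow (hk : IsPosDefKernel k) (N : ℕ) : IsPosDefKernel fun x y => k x y ^ N := by
  induction N with
  | zero => simpa only [pow_zero, mul_one] using isPosDefKernel_mul_self fun _ : α => (1 : ℝ)
  | succ N ih => simpa only [pow_succ] using ih.mul hk

theorem exp (hk : IsPosDefKernel k) : IsPosDefKernel fun x y => Real.exp (k x y) := by
  refine ⟨fun x y => by rw [hk.symm], fun n x c => ?_⟩
  have hsum : HasSum (fun N : ℕ => ∑ i, ∑ j, c i * c j * ((N.factorial : ℝ)⁻¹ * k (x i) (x j) ^ N))
      (∑ i, ∑ j, c i * c j * Real.exp (k (x i) (x j))) := by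
    refine hasSum_sum fun i _ => hasSum_sum fun j _ => HasSum.mul_left _ ?_
    simpa only [Real.exp_eq_exp_ℝ, inv_mul_eq_div] using
      NormedSpace.expSeries_div_hasSum_exp (k (x i) (x j))
  exact hsum.nonneg fun N => ((hk.pow N).const_mul (by positivity)).sum_mul_nonneg n x c

theorem isNegDefKernel_add_sub (hk : IsPosDefKernel k) (f : α → ℝ) :
    IsNegDefKernel fun x y => f x + f y - k x y := by
  intro n x c hc
  simp only [mul_sub, mul_add, sum_sub_distrib, sum_add_distrib]
  rw [sum_sum_mul_mul_left c fun i => f (x i), sum_sum_mul_mul_right c fun j => f (x j), hc,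
    mul_zero, zero_mul, zero_add, zero_sub, neg_nonpos]
  exact hk.sum_mul_nonneg n x c

end IsPosDefKernel

namespace IsNegDefKernel

variable {k : α → α → ℝ}

theorem comp (hk : IsNegDefKernel k) (f : β → α) : IsNegDefKernel fun x y => k (f x) (f y) :=
  fun n x c hc => hk n (f ∘ x) c hc

theorem mul_const (hk : IsNegDefKernel k) {t : ℝ} (ht : 0 ≤ t) :
    IsNegDefKernel fun x y => k x y * t := by
  intro n x c hc
  simp only [← mul_assoc, ← sum_mul]
  exact mul_nonpos_of_nonpos_of_nonneg (hk n x c hc) ht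

theorem const_mul (hk : IsNegDefKernel k) {t : ℝ} (ht : 0 ≤ t) :
    IsNegDefKernel fun x y => t * k x y := by
  simpa only [mul_comm t] using hk.mul_const ht

theorem sum {ι : Type*} {k : ι → α → α → ℝ} (s : Finset ι) (hk : ∀ e ∈ s, IsNegDefKernel (k e)) :
    IsNegDefKernel fun x y => ∑ e ∈ s, k e x y := by
  intro n x c hc
  calc ∑ i, ∑ j, c i * c j * ∑ e ∈ s, k e (x i) (x j)
      = ∑ i, ∑ e ∈ s, ∑ j, c i * c j * k e (x i) (x j) := by
        simp only [mul_sum]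
        exact sum_congr rfl fun i _ => sum_comm
    _ = ∑ e ∈ s, ∑ i, ∑ j, c i * c j * k e (x i) (x j) := sum_comm
    _ ≤ 0 := sum_nonpos fun e he => hk e he n x c hc

theorem isPosDefKernel_shift (hk : IsNegDefKernel k) (hsymm : ∀ x y, k x y = k y x) (x₀ : α) :
    IsPosDefKernel fun x y => k x x₀ + k y x₀ - k x y - k x₀ x₀ := by
  refine ⟨fun x y => by rw [hsymm x y]; ring, fun n x c => ?_⟩
  set S := ∑ i, c i
  set a := ∑ i, c i * k (x i) x₀
  set Q := ∑ i, ∑ j, c i * c j * k (x i) (x j)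
  have hcross (t : ℝ) : ∑ i, c i * t * k (x i) x₀ = t * a := by
    rw [mul_sum]; exact sum_congr rfl fun i _ => by ring
  have h := hk (n + 1) (Fin.cons x₀ x) (Fin.cons (-S) c) (by simp [Fin.sum_univ_succ, S])
  simp only [Fin.sum_univ_succ, Fin.cons_zero, Fin.cons_succ, sum_add_distrib, hsymm x₀,
    mul_comm (-S) (c _), hcross] at h
  have hg : ∑ i, ∑ j, c i * c j * (k (x i) x₀ + k (x j) x₀ - k (x i) (x j) - k x₀ x₀)
      = 2 * S * a - Q - S ^ 2 * k x₀ x₀ := by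
    simp only [mul_sub, mul_add, sum_sub_distrib, sum_add_distrib]
    rw [sum_sum_mul_mul_left c (fun i => k (x i) x₀), sum_sum_mul_mul_right c (fun j => k (x j) x₀),
      sum_sum_mul_mul_right c (fun _ => k x₀ x₀), ← sum_mul]
    ring
  rw [hg]
  linear_combination h

/-- **Schoenberg's theorem** (one direction). -/
theorem isPosDefKernel_exp_neg (hk : IsNegDefKernel k) (hsymm : ∀ x y, k x y = k y x) :
    IsPosDefKernel fun x y => Real.exp (-k x y) := by
  refine ⟨fun x y => by rw [hsymm], fun n x c => ?_⟩
  rcases n with _ | n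
  · simp
  set x₀ := x 0
  have hfactor : ∀ y z, Real.exp (-k y z) = Real.exp (k x₀ x₀) * (Real.exp (-k y x₀) *
      Real.exp (-k z x₀) * Real.exp (k y x₀ + k z x₀ - k y z - k x₀ x₀)) := fun y z => by
    simp only [← Real.exp_add]
    ring_nf
  simpa only [← hfactor] using (((isPosDefKernel_mul_self fun y => Real.exp (-k y x₀)).mul
    (hk.isPosDefKernel_shift hsymm x₀).exp).const_mul (Real.exp_pos (k x₀ x₀)).le).sum_mul_nonneg
      _ x c

open MeasureTheory in
theorem of_mul_eq_integral {Ω : Type*} [MeasurableSpace Ω] {μ : Measure Ω} {ν : Ω → ℝ}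
    {K : Ω → α → α → ℝ} {C : ℝ} (hC : 0 < C) (hK : ∀ᵐ s ∂μ, IsPosDefKernel (K s))
    (hint : ∀ x y, Integrable (fun s => ν s - K s x y) μ)
    (hrep : ∀ x y, C * k x y = ∫ s, (ν s - K s x y) ∂μ) : IsNegDefKernel k := by
  intro n x c hc
  refine nonpos_of_mul_nonpos_right ?_ hC
  calc C * ∑ i, ∑ j, c i * c j * k (x i) (x j)
      = ∫ s, ∑ i, ∑ j, c i * c j * (ν s - K s (x i) (x j)) ∂μ := by
        simp only [mul_sum, mul_left_comm C, hrep]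
        rw [integral_finsetSum _ fun i _ => integrable_finsetSum _ fun j _ =>
          (hint _ _).const_mul _]
        refine sum_congr rfl fun i _ => ?_
        rw [integral_finsetSum _ fun j _ => (hint _ _).const_mul _]
        exact sum_congr rfl fun j _ => (integral_const_mul _ _).symm
    _ ≤ 0 := by
        refine integral_nonpos_of_ae (hK.mono fun s hKs => ?_)
        simp only [mul_sub, sum_sub_distrib]
        rw [sum_sum_mul_mul_right c fun _ => ν s, hc, zero_mul, zero_sub, Pi.zero_apply, neg_nonpos]
        exact hKs.sum_mul_nonneg n x c

end IsNegDefKernel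

end KernelAlgebra

section PowerWeightedIntegrals

open MeasureTheory Set Real Asymptotics

variable {f : ℝ → ℝ} {q b : ℝ}

theorem rpow_neg_sub_one_mul_comp_mul_left (hb : 0 < b) {t : ℝ} (ht : 0 < t) :
    t ^ (-q - 1) * f (b * t) = b ^ (q + 1) * ((b * t) ^ (-q - 1) * f (b * t)) := by
  rw [mul_rpow hb.le ht.le, ← mul_assoc, ← mul_assoc, ← rpow_add hb]
  ring_nf
  rw [rpow_zero, mul_one]

theorem integrableOn_Ioi_rpow_mul_comp_mul_left
    (hf : IntegrableOn (fun t => t ^ (-q - 1) * f t) (Ioi 0)) (hf0 : f 0 = 0) (hb : 0 ≤ b) :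
    IntegrableOn (fun t => t ^ (-q - 1) * f (b * t)) (Ioi 0) := by
  rcases hb.eq_or_lt with rfl | hb
  · simp [hf0]
  have hscaled := (integrableOn_Ioi_comp_mul_left_iff _ 0 hb).mpr (by rwa [mul_zero])
  exact IntegrableOn.congr_fun (hscaled.const_mul (b ^ (q + 1)))
    (fun t ht => (rpow_neg_sub_one_mul_comp_mul_left hb ht).symm) measurableSet_Ioi

theorem integral_Ioi_rpow_mul_comp_mul_left (hf0 : f 0 = 0) (hq : q ≠ 0) (hb : 0 ≤ b) :
    ∫ t in Ioi 0, t ^ (-q - 1) * f (b * t) = b ^ q * ∫ t in Ioi 0, t ^ (-q - 1) * f t := by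
  rcases hb.eq_or_lt with rfl | hb
  · simp [hf0, zero_rpow hq]
  rw [setIntegral_congr_fun measurableSet_Ioi fun t ht => rpow_neg_sub_one_mul_comp_mul_left hb ht,
    integral_const_mul, integral_comp_mul_left_Ioi (fun t => t ^ (-q - 1) * f t) 0 hb, mul_zero,
    smul_eq_mul, ← mul_assoc, rpow_add hb, rpow_one, mul_inv_cancel_right₀ hb.ne']

theorem integral_Ioi_rpow_mul_pos (hf : IntegrableOn (fun t => t ^ (-q - 1) * f t) (Ioi 0))
    (hnonneg : ∀ t, 0 < t → 0 ≤ f t) {a : ℝ} (ha : 0 < a) (hpos : ∀ t ∈ Ioo 0 a, 0 < f t) :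
    0 < ∫ t in Ioi 0, t ^ (-q - 1) * f t := by
  rw [setIntegral_pos_iff_support_of_nonneg_ae ?_ hf]
  · refine lt_of_lt_of_le (b := volume (Ioo 0 a)) (by simpa using ha) (measure_mono ?_)
    exact fun t ht => ⟨(mul_pos (rpow_pos_of_pos ht.1 _) (hpos t ht)).ne', ht.1⟩
  · exact (ae_restrict_iff' measurableSet_Ioi).mpr (.of_forall fun t ht =>
      mul_nonneg (rpow_nonneg (le_of_lt ht) _) (hnonneg t ht))


theorem integrableOn_Ioi_rpow_mul_one_sub_cos (hq0 : 0 < q) (hq2 : q < 2) :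
    IntegrableOn (fun t => t ^ (-q - 1) * (1 - cos t)) (Ioi 0) := by
  refine mellin_convergent_of_isBigO_scalar (a := 0) (b := -2)
    ((continuous_const.sub continuous_cos).locallyIntegrable.locallyIntegrableOn _) ?_
    (by linarith) ?_ (by linarith)
  · refine IsBigO.of_bound 2 (.of_forall fun t => ?_)
    rw [neg_zero, rpow_zero, norm_one, mul_one, norm_eq_abs, abs_le]
    constructor <;> linarith [neg_one_le_cos t, cos_le_one t]
  · refine IsBigO.of_bound (1 / 2) (eventually_nhdsWithin_of_forall fun t _ => ?_)
    rw [neg_neg, rpow_two, norm_eq_abs, norm_eq_abs, abs_of_nonneg (by linarith [cos_le_one t]),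
      abs_of_nonneg (sq_nonneg t)]
    linarith [one_sub_sq_div_two_le_cos (x := t)]

theorem integrableOn_Ioi_rpow_mul_one_sub_exp_neg (hq0 : 0 < q) (hq1 : q < 1) :
    IntegrableOn (fun t => t ^ (-q - 1) * (1 - exp (-t))) (Ioi 0) := by
  refine mellin_convergent_of_isBigO_scalar (a := 0) (b := -1)
    ((continuous_const.sub (continuous_exp.comp continuous_neg)).locallyIntegrable
      |>.locallyIntegrableOn _) ?_ (by linarith) ?_ (by linarith)
  · refine IsBigO.of_bound 1 (Filter.eventually_atTop.mpr ⟨0, fun t ht => ?_⟩)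
    rw [neg_zero, rpow_zero, norm_one, mul_one, norm_eq_abs, abs_le]
    constructor <;> linarith [exp_pos (-t), exp_le_one_iff.mpr (neg_nonpos.mpr ht)]
  · refine IsBigO.of_bound 1 (eventually_nhdsWithin_of_forall fun t (ht : 0 < t) => ?_)
    rw [neg_neg, rpow_one, one_mul, norm_eq_abs, norm_eq_abs, abs_of_pos ht, abs_le]
    constructor <;> linarith [add_one_le_exp (-t), exp_le_one_iff.mpr (neg_nonpos.mpr ht.le)]

end PowerWeightedIntegrals

section IntegralRepresentations

open MeasureTheory Set Real

theorem isPosDefKernel_cos_sub : IsPosDefKernel fun s t : ℝ => cos (s - t) := by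
  simpa only [cos_sub] using (isPosDefKernel_mul_self cos).add (isPosDefKernel_mul_self sin)

theorem isNegDefKernel_abs_sub_rpow {p : ℝ} (hp0 : 0 < p) (hp2 : p ≤ 2) :
    IsNegDefKernel fun s t : ℝ => |s - t| ^ p := by
  rcases hp2.lt_or_eq with hp2 | rfl
  · have hint := integrableOn_Ioi_rpow_mul_one_sub_cos hp0 hp2
    have hcos (b : ℝ) {u : ℝ} (hu : u ∈ Ioi 0) :
        u ^ (-p - 1) * (1 - cos (|b| * u)) = u ^ (-p - 1) - u ^ (-p - 1) * cos (b * u) := by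
      rw [← abs_of_pos (mem_Ioi.mp hu), ← abs_mul, cos_abs, abs_of_pos (mem_Ioi.mp hu), mul_sub,
        mul_one]
    refine IsNegDefKernel.of_mul_eq_integral (μ := volume.restrict (Ioi 0))
      (ν := fun u => u ^ (-p - 1)) (K := fun u s t => u ^ (-p - 1) * cos (s * u - t * u))
      (integral_Ioi_rpow_mul_pos hint (fun t _ => by linarith [cos_le_one t]) pi_pos
        fun t ht => by linarith [cos_lt_cos_of_nonneg_of_le_pi le_rfl ht.2.le ht.1, cos_zero])
      (ae_restrict_of_forall_mem measurableSet_Ioi fun u hu =>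
        (isPosDefKernel_cos_sub.comp (· * u)).const_mul (rpow_nonneg (le_of_lt hu) _))
      (fun s t => ?_) (fun s t => ?_)
    · refine IntegrableOn.congr_fun (integrableOn_Ioi_rpow_mul_comp_mul_left hint (by simp)
        (abs_nonneg (s - t))) (fun u hu => ?_) measurableSet_Ioi
      simp only [hcos _ hu, sub_mul]
    · rw [mul_comm, ← integral_Ioi_rpow_mul_comp_mul_left (by simp) hp0.ne' (abs_nonneg _)]
      exact setIntegral_congr_fun measurableSet_Ioi fun u hu => by simp only [hcos _ hu, sub_mul]
  · have h := (isPosDefKernel_mul_self id).const_mul zero_le_two |>.isNegDefKernel_add_sub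
      fun s => s ^ 2
    convert h using 3 with s t
    rw [rpow_two, sq_abs, id, id]
    ring

namespace IsNegDefKernel

variable {k : α → α → ℝ}

theorem rpow (hk : IsNegDefKernel k) (hsymm : ∀ x y, k x y = k y x) (hnonneg : ∀ x y, 0 ≤ k x y)
    {r : ℝ} (hr0 : 0 < r) (hr1 : r ≤ 1) : IsNegDefKernel fun x y => k x y ^ r := by
  rcases hr1.lt_or_eq with hr1 | rfl
  · have hint := integrableOn_Ioi_rpow_mul_one_sub_exp_neg hr0 hr1
    have hexp_lt {t : ℝ} (ht : 0 < t) : exp (-t) < 1 := exp_lt_one_iff.mpr (neg_lt_zero.mpr ht)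
    refine of_mul_eq_integral (μ := volume.restrict (Ioi 0))
      (ν := fun u => u ^ (-r - 1)) (K := fun u x y => u ^ (-r - 1) * exp (-(k x y * u)))
      (integral_Ioi_rpow_mul_pos hint (fun t ht => by linarith [hexp_lt ht]) one_pos
        fun t ht => by linarith [hexp_lt ht.1])
      (ae_restrict_of_forall_mem measurableSet_Ioi fun u hu =>
        ((hk.mul_const (le_of_lt hu)).isPosDefKernel_exp_neg fun x y => by rw [hsymm]).const_mul
          (rpow_nonneg (le_of_lt hu) _))
      (fun x y => ?_) (fun x y => ?_)
    · have h := integrableOn_Ioi_rpow_mul_comp_mul_left hint (by simp) (hnonneg x y)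
      simp only [mul_sub, mul_one] at h
      exact h
    · rw [mul_comm, ← integral_Ioi_rpow_mul_comp_mul_left (by simp) hr0.ne' (hnonneg x y)]
      simp only [mul_sub, mul_one]
  · simpa only [rpow_one] using hk

end IsNegDefKernel

end IntegralRepresentations

theorem weighted_lp_dist_negative_definite_general
    (p : ℝ) (hp1 : 1 ≤ p) (hp2 : p ≤ 2)
    (m : ℕ) (w : Fin m → ℝ) (hw : ∀ e, 0 ≤ w e) :
    ∀ (n : ℕ), 1 ≤ n → ∀ (x : Fin n → Fin m → ℝ) (c : Fin n → ℝ), (∑ i, c i) = 0 →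
      ∑ i, ∑ j, c i * c j * (∑ e, w e * |x i e - x j e| ^ p) ^ (1 / p) ≤ 0 := by
  have hp0 : 0 < p := by linarith
  have hk : IsNegDefKernel fun x z : Fin m → ℝ => ∑ e, w e * |x e - z e| ^ p :=
    -- elaborated without the expected type, against which higher-order unification stalls
    .sum _ fun e _ =>
      (((isNegDefKernel_abs_sub_rpow hp0 hp2).comp fun x : Fin m → ℝ => x e).const_mul (hw e) :)
  have hsymm (x z : Fin m → ℝ) : ∑ e, w e * |x e - z e| ^ p = ∑ e, w e * |z e - x e| ^ p := by
    simp only [abs_sub_comm]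
  have hnonneg (x z : Fin m → ℝ) : 0 ≤ ∑ e, w e * |x e - z e| ^ p :=
    Finset.sum_nonneg fun e _ => mul_nonneg (hw e) (by positivity)
  intro n _ x c hc
  exact hk.rpow hsymm hnonneg (by positivity) ((div_le_one hp0).mpr hp1) n x c hc

/-- For `1 ≤ p ≤ 2` and nonnegative weights, the weighted `ℓ_p` distance
`(x, z) ↦ (∑_e w_e |x_e - z_e|^p)^{1/p}` on `ℝ^m` is negative definite. -/
theorem weighted_lp_dist_negative_definite
    (p : ℝ) (hp1 : 1 ≤ p) (hp2 : p ≤ 2)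
    (m : ℕ) (hm : 0 < m) (w : Fin m → ℝ) (hw : ∀ e, 0 ≤ w e) :
    ∀ (n : ℕ), 1 ≤ n → ∀ (x : Fin n → Fin m → ℝ) (c : Fin n → ℝ), (∑ i, c i) = 0 →
      ∑ i, ∑ j, c i * c j * (∑ e, w e * |x i e - x j e| ^ p) ^ (1 / p) ≤ 0 :=
  weighted_lp_dist_negative_definite_general p hp1 hp2 m w hw
end

section
/- Let 1 ≤ p ≤ 2, let t > 0, let m be a positive integer, and let w_1, …, w_m ≥ 0 be nonnegative reals. Then the kernel K(x, z) := exp( −t ∑_{e=1}^m w_e |x_e − z_e|^p ) on ℝ^m is positive definite: for every integer n ≥ 1, all x^{(1)}, …, x^{(n)} ∈ ℝ^m and all c_1, …, c_n ∈ ℝ, one has ∑_{i=1}^n ∑_{j=1}^n c_i c_j exp( −t ∑_{e=1}^m w_e |x^{(i)}_e − x^{(j)}_e|^p ) ≥ 0. -/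
/-!
For `0 < p < 2` one has `|u| ^ p = C⁻¹ ∫₀^∞ s^(-1-p) (1 - cos (u s)) ds` with `C > 0`, and
`1 - cos (a i - a j) = 1/2 + 1/2 - (cos a i cos a j + sin a i sin a j)` is conditionally negative
definite, hence so is `|a i - a j| ^ p` (for `p = 2` expand the square). Nonnegative combinations
keep this property, so the exponent `N` of the kernel is conditionally negative definite.
Schoenberg: such an `N` has the form `N i j = f i + f j - B i j` with `B` positive semidefinite, so
`exp (-N i j) = e^(-f i) e^(-f j) exp (B i j)`, which is positive semidefinite by the Schur product
theorem applied termwise to the exponential series.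
-/

open MeasureTheory Set Real Matrix
open scoped ComplexOrder

section IntegralRepresentation

variable {p : ℝ}

theorem integrableOn_rpow_mul_one_sub_cos_mul (u : ℝ) (hp0 : 0 < p) (hp2 : p < 2) :
    IntegrableOn (fun s => s ^ (-1 - p) * (1 - cos (u * s))) (Ioi 0) := by
  have hcont : ContinuousOn (fun s => s ^ (-1 - p) * (1 - cos (u * s))) (Ioi 0) :=
    (continuousOn_id.rpow_const fun s hs => Or.inl (ne_of_gt hs)).mul (by fun_prop)
  have hnorm : ∀ s ∈ Ioi (0 : ℝ),
      ‖s ^ (-1 - p) * (1 - cos (u * s))‖ = s ^ (-1 - p) * (1 - cos (u * s)) := fun s hs =>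
    norm_of_nonneg (mul_nonneg (rpow_nonneg (le_of_lt hs) _) (sub_nonneg.mpr (cos_le_one _)))
  rw [← Ioc_union_Ioi_eq_Ioi zero_le_one]
  refine IntegrableOn.union ?_ ?_
  · have hdom : IntegrableOn (fun s : ℝ => u ^ 2 / 2 * s ^ (1 - p)) (Ioc 0 1) :=
      ((intervalIntegrable_iff_integrableOn_Ioc_of_le zero_le_one).mp
        (intervalIntegral.intervalIntegrable_rpow' (by linarith))).const_mul _
    refine hdom.mono' ((hcont.mono Ioc_subset_Ioi_self).aestronglyMeasurable measurableSet_Ioc) ?_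
    filter_upwards [ae_restrict_mem measurableSet_Ioc] with s hs
    rw [hnorm s hs.1]
    calc s ^ (-1 - p) * (1 - cos (u * s)) ≤ s ^ (-1 - p) * ((u * s) ^ 2 / 2) :=
          mul_le_mul_of_nonneg_left (by linarith [one_sub_sq_div_two_le_cos (x := u * s)])
            (rpow_nonneg hs.1.le _)
      _ = u ^ 2 / 2 * s ^ (1 - p) := by
          rw [show 1 - p = (-1 - p) + 2 by ring, rpow_add hs.1, rpow_two]
          ring
  · have hdom : IntegrableOn (fun s : ℝ => s ^ (-1 - p) * 2) (Ioi 1) :=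
      (integrableOn_Ioi_rpow_of_lt (by linarith) one_pos).mul_const 2
    refine hdom.mono' ((hcont.mono (Ioi_subset_Ioi zero_le_one)).aestronglyMeasurable
      measurableSet_Ioi) ?_
    filter_upwards [ae_restrict_mem measurableSet_Ioi] with s hs
    have hs0 : (0 : ℝ) < s := zero_lt_one.trans hs
    rw [hnorm s hs0]
    exact mul_le_mul_of_nonneg_left (by linarith [neg_one_le_cos (u * s)]) (rpow_nonneg hs0.le _)

theorem integral_rpow_mul_one_sub_cos_mul (u : ℝ) (hp0 : 0 < p) :
    ∫ s in Ioi 0, s ^ (-1 - p) * (1 - cos (u * s)) =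
      |u| ^ p * ∫ s in Ioi 0, s ^ (-1 - p) * (1 - cos s) := by
  rcases eq_or_ne u 0 with rfl | hu
  · simp [zero_rpow hp0.ne']
  have hu' : 0 < |u| := abs_pos.mpr hu
  have hscale : ∀ s ∈ Ioi (0 : ℝ), s ^ (-1 - p) * (1 - cos (u * s)) =
      |u| ^ (1 + p) * ((|u| * s) ^ (-1 - p) * (1 - cos (|u| * s))) := fun s hs => by
    rw [← cos_abs (u * s), abs_mul, abs_of_pos (show (0 : ℝ) < s from hs),
      mul_rpow hu'.le (le_of_lt hs), ← mul_assoc, ← mul_assoc, ← rpow_add hu']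
    norm_num
  rw [setIntegral_congr_fun measurableSet_Ioi hscale, integral_const_mul,
    integral_comp_mul_left_Ioi (fun s => s ^ (-1 - p) * (1 - cos s)) 0 hu', mul_zero, smul_eq_mul,
    ← mul_assoc, ← rpow_neg_one, ← rpow_add hu']
  ring_nf

theorem integral_rpow_mul_one_sub_cos_pos (hp0 : 0 < p) (hp2 : p < 2) :
    0 < ∫ s in Ioi 0, s ^ (-1 - p) * (1 - cos s) := by
  have hint := integrableOn_rpow_mul_one_sub_cos_mul 1 hp0 hp2
  simp only [one_mul] at hint
  rw [setIntegral_pos_iff_support_of_nonneg_ae _ hint]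
  · have hsub : Ioo (π / 2) π ⊆ Function.support (fun s => s ^ (-1 - p) * (1 - cos s)) ∩ Ioi 0 :=
      fun s hs => by
        have hs0 : 0 < s := (by positivity : (0 : ℝ) < π / 2).trans hs.1
        have hcos : cos s ≤ 0 := cos_nonpos_of_pi_div_two_le_of_le hs.1.le (by linarith [hs.2])
        exact ⟨(mul_pos (rpow_pos_of_pos hs0 _) (by linarith)).ne', hs0⟩
    refine lt_of_lt_of_le ?_ (measure_mono hsub)
    simp [pi_pos]
  · filter_upwards [ae_restrict_mem measurableSet_Ioi] with s hs
    exact mul_nonneg (rpow_nonneg (le_of_lt hs) _) (sub_nonneg.mpr (cos_le_one s))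

end IntegralRepresentation

namespace Matrix

variable {ι : Type*}

theorem isSymm_of_add (f : ι → ℝ) : (of fun i j => f i + f j).IsSymm :=
  IsSymm.ext fun _ _ => add_comm _ _

variable [Fintype ι]

theorem dotProduct_mulVec_eq_sum_sum {R : Type*} [CommSemiring R] (M : Matrix ι ι R) (c : ι → R) :
    c ⬝ᵥ M *ᵥ c = ∑ i, ∑ j, c i * c j * M i j := by
  simp only [dotProduct, mulVec, Finset.mul_sum]
  exact Finset.sum_congr rfl fun i _ => Finset.sum_congr rfl fun j _ => by ring

theorem PosSemidef.map_pow {𝕜 : Type*} [RCLike 𝕜] {A : Matrix ι ι 𝕜} (hA : A.PosSemidef) :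
    ∀ k : ℕ, (A.map (· ^ k)).PosSemidef
  | 0 => by
    convert posSemidef_vecMulVec_self_star (fun _ : ι => (1 : 𝕜)) using 1
    ext i j
    simp [vecMulVec_apply]
  | k + 1 => by
    convert (hA.map_pow k).hadamard hA using 1
    ext i j
    simp [pow_succ]

theorem PosSemidef.map_exp {A : Matrix ι ι ℝ} (hA : A.PosSemidef) :
    (A.map Real.exp).PosSemidef := by
  refine .of_dotProduct_mulVec_nonneg (hA.isHermitian.map _ fun _ => rfl) fun c => ?_
  have hsum : HasSum (fun k : ℕ => c ⬝ᵥ A.map (· ^ k) *ᵥ c / k.factorial)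
      (c ⬝ᵥ A.map Real.exp *ᵥ c) := by
    simp only [dotProduct_mulVec_eq_sum_sum, map_apply, Finset.sum_div, mul_div_assoc]
    refine hasSum_sum fun i _ => hasSum_sum fun j _ => HasSum.mul_left _ ?_
    rw [Real.exp_eq_exp_ℝ]
    exact NormedSpace.expSeries_div_hasSum_exp _
  have hterm : ∀ k : ℕ, 0 ≤ c ⬝ᵥ A.map (· ^ k) *ᵥ c / k.factorial := fun k =>
    div_nonneg (by simpa only [star_trivial] using (hA.map_pow k).dotProduct_mulVec_nonneg c)
      (by positivity)
  simpa only [star_trivial] using hsum.nonneg hterm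

def CondNegDef (N : Matrix ι ι ℝ) : Prop :=
  N.IsSymm ∧ ∀ c : ι → ℝ, ∑ i, c i = 0 → c ⬝ᵥ N *ᵥ c ≤ 0

namespace CondNegDef

variable {N M : Matrix ι ι ℝ}

theorem add (hN : N.CondNegDef) (hM : M.CondNegDef) : (N + M).CondNegDef :=
  ⟨hN.1.add hM.1, fun c hc => by
    simpa only [add_mulVec, dotProduct_add] using add_nonpos (hN.2 c hc) (hM.2 c hc)⟩

theorem smul (hN : N.CondNegDef) {a : ℝ} (ha : 0 ≤ a) : (a • N).CondNegDef :=
  ⟨hN.1.smul a, fun c hc => by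
    simpa only [smul_mulVec, dotProduct_smul, smul_eq_mul] using
      mul_nonpos_of_nonneg_of_nonpos ha (hN.2 c hc)⟩

theorem sum {κ : Type*} {N : κ → Matrix ι ι ℝ} (s : Finset κ) (hN : ∀ e ∈ s, (N e).CondNegDef) :
    (∑ e ∈ s, N e).CondNegDef :=
  Finset.sum_induction _ CondNegDef (fun _ _ => add) ⟨isSymm_zero, by simp⟩ hN

end CondNegDef

theorem dotProduct_mulVec_of_add_eq_zero (f g c : ι → ℝ) (hc : ∑ i, c i = 0) :
    c ⬝ᵥ (of fun i j => f i + g j) *ᵥ c = 0 := by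
  have hsplit : ∀ i j, c i * c j * (f i + g j) = c i * f i * c j + c i * (c j * g j) :=
    fun i j => by ring
  simp only [dotProduct_mulVec_eq_sum_sum, of_apply, hsplit, Finset.sum_add_distrib,
    ← Finset.sum_mul_sum, hc, mul_zero, zero_mul, add_zero]

theorem PosSemidef.condNegDef_sub {G : Matrix ι ι ℝ} (hG : G.PosSemidef) (f : ι → ℝ) :
    (of (fun i j => f i + f j) - G).CondNegDef := by
  refine ⟨(isSymm_of_add f).sub (isHermitian_iff_isSymm.mp hG.isHermitian), fun c hc => ?_⟩
  have hGc := hG.dotProduct_mulVec_nonneg c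
  rw [star_trivial] at hGc
  rw [sub_mulVec, dotProduct_sub, dotProduct_mulVec_of_add_eq_zero f f c hc]
  linarith

theorem CondNegDef.exists_posSemidef [Nonempty ι] {N : Matrix ι ι ℝ} (hN : N.CondNegDef) :
    ∃ f : ι → ℝ, ∃ B : Matrix ι ι ℝ, B.PosSemidef ∧ N = of (fun i j => f i + f j) - B := by
  classical
  obtain ⟨i₀⟩ := ‹Nonempty ι›
  set f : ι → ℝ := fun i => N i i₀ - N i₀ i₀ / 2
  set B : Matrix ι ι ℝ := of (fun i j => f i + f j) - N with hB
  refine ⟨f, B, .of_dotProduct_mulVec_nonneg ?_ fun c => ?_, (sub_sub_cancel _ _).symm⟩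
  · exact isHermitian_iff_isSymm.mpr ((isSymm_of_add f).sub hN.1)
  -- `B` vanishes on row and column `i₀`, so moving `c` along the `i₀`-th basis vector until it
  -- sums to zero leaves the quadratic form of `B` unchanged.
  have hcol : ∀ i, B i i₀ = 0 := fun i => by
    simp only [hB, f, sub_apply, of_apply]
    ring
  have hrow : ∀ j, B i₀ j = 0 := fun j => by
    simp only [hB, f, sub_apply, of_apply, hN.1.apply i₀ j]
    ring
  set d : ι → ℝ := c - Pi.single i₀ (∑ i, c i)
  have hd : ∑ i, d i = 0 := by simp [d, Finset.sum_sub_distrib]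
  have hcd : ∀ i j, c i * c j * B i j = d i * d j * B i j := fun i j => by
    by_cases hi : i = i₀
    · simp [hi, hrow]
    by_cases hj : j = i₀
    · simp [hj, hcol]
    simp [d, hi, hj]
  calc 0 ≤ -(d ⬝ᵥ N *ᵥ d) := neg_nonneg.mpr (hN.2 d hd)
    _ = d ⬝ᵥ B *ᵥ d := by
      rw [hB, sub_mulVec, dotProduct_sub, dotProduct_mulVec_of_add_eq_zero f f d hd, zero_sub]
    _ = star c ⬝ᵥ B *ᵥ c := by simp only [star_trivial, dotProduct_mulVec_eq_sum_sum, hcd]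

theorem CondNegDef.posSemidef_map_exp_neg {N : Matrix ι ι ℝ} (hN : N.CondNegDef) :
    (N.map fun x => Real.exp (-x)).PosSemidef := by
  cases isEmpty_or_nonempty ι
  · rw [Subsingleton.elim (N.map _) 0]
    exact PosSemidef.zero
  obtain ⟨f, B, hB, rfl⟩ := hN.exists_posSemidef
  have hfactor : ((of fun i j => f i + f j) - B).map (fun x => Real.exp (-x)) =
      vecMulVec (fun i => Real.exp (-f i)) (star fun i => Real.exp (-f i)) ⊙ B.map Real.exp := by
    ext i j
    simp only [map_apply, sub_apply, of_apply, hadamard_apply, vecMulVec_apply, star_trivial,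
      ← Real.exp_add]
    ring_nf
  rw [hfactor]
  exact (posSemidef_vecMulVec_self_star _).hadamard hB.map_exp

theorem CondNegDef.integral {α : Type*} [MeasurableSpace α] {μ : Measure α}
    {N : α → Matrix ι ι ℝ} (hN : ∀ᵐ s ∂μ, (N s).CondNegDef)
    (hint : ∀ i j, Integrable (fun s => N s i j) μ) :
    (of fun i j => ∫ s, N s i j ∂μ).CondNegDef := by
  refine ⟨IsSymm.ext fun i j => integral_congr_ae (hN.mono fun s hs => hs.1.apply i j),
    fun c hc => ?_⟩
  have hquad : c ⬝ᵥ (of fun i j => ∫ s, N s i j ∂μ) *ᵥ c = ∫ s, c ⬝ᵥ N s *ᵥ c ∂μ := by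
    simp only [dotProduct_mulVec_eq_sum_sum, of_apply, ← integral_const_mul]
    rw [integral_finsetSum _ fun i _ => integrable_finsetSum _ fun j _ => (hint i j).const_mul _]
    exact Finset.sum_congr rfl fun i _ =>
      (integral_finsetSum _ fun j _ => (hint i j).const_mul _).symm
  rw [hquad]
  exact integral_nonpos_of_ae (hN.mono fun s hs => hs.2 c hc)

theorem condNegDef_one_sub_cos_sub (a : ι → ℝ) :
    (of fun i j => 1 - cos (a i - a j)).CondNegDef := by
  have hG := (posSemidef_vecMulVec_self_star (cos ∘ a)).add
    (posSemidef_vecMulVec_self_star (sin ∘ a))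
  convert hG.condNegDef_sub (fun _ => 1 / 2) using 1
  ext i j
  simp only [of_apply, sub_apply, add_apply, vecMulVec_apply, star_trivial, Function.comp_apply,
    cos_sub]
  ring

theorem condNegDef_abs_sub_rpow (a : ι → ℝ) {p : ℝ} (hp0 : 0 < p) (hp2 : p ≤ 2) :
    (of fun i j => |a i - a j| ^ p).CondNegDef := by
  rcases hp2.lt_or_eq with hp2 | rfl
  · have hI := integral_rpow_mul_one_sub_cos_pos hp0 hp2
    have hrepr : (of fun i j => |a i - a j| ^ p) =
        (∫ s in Ioi 0, s ^ (-1 - p) * (1 - cos s))⁻¹ • of fun i j =>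
          ∫ s in Ioi 0, (s ^ (-1 - p) • of fun i j => 1 - cos (a i * s - a j * s)) i j := by
      ext i j
      simp only [Matrix.smul_apply, of_apply, smul_eq_mul, ← sub_mul]
      rw [integral_rpow_mul_one_sub_cos_mul _ hp0, mul_comm, mul_inv_cancel_right₀ hI.ne']
    rw [hrepr]
    refine CondNegDef.smul (CondNegDef.integral ?_ fun i j => ?_) (inv_nonneg.mpr hI.le)
    · filter_upwards [ae_restrict_mem measurableSet_Ioi] with s hs
      exact (condNegDef_one_sub_cos_sub fun i => a i * s).smul (rpow_nonneg (le_of_lt hs) _)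
    · simp only [Matrix.smul_apply, of_apply, smul_eq_mul, ← sub_mul]
      exact integrableOn_rpow_mul_one_sub_cos_mul (a i - a j) hp0 hp2
  · convert ((posSemidef_vecMulVec_self_star a).smul (zero_le_two : (0 : ℝ) ≤ 2)).condNegDef_sub
      (fun i => a i ^ 2) using 1
    ext i j
    simp only [of_apply, sub_apply, Matrix.smul_apply, vecMulVec_apply, star_trivial, smul_eq_mul,
      rpow_two, sq_abs]
    ring

end Matrix

theorem exp_neg_weighted_lp_pow_positive_definite_general
    (p : ℝ) (hp1 : 1 ≤ p) (hp2 : p ≤ 2)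
    (t : ℝ) (ht : 0 < t)
    (m : ℕ) (w : Fin m → ℝ) (hw : ∀ e, 0 ≤ w e) :
    ∀ (n : ℕ), 1 ≤ n → ∀ (x : Fin n → Fin m → ℝ) (c : Fin n → ℝ),
      0 ≤ ∑ i, ∑ j, c i * c j *
        Real.exp (-(t * ∑ e, w e * |x i e - x j e| ^ p)) := by
  intro n _ x c
  set N : Matrix (Fin n) (Fin n) ℝ := ∑ e, (t * w e) • of fun i j => |x i e - x j e| ^ p
  have hN : N.CondNegDef := CondNegDef.sum _ fun e _ =>
    (condNegDef_abs_sub_rpow (fun i => x i e) (by linarith) hp2).smul (mul_nonneg ht.le (hw e))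
  have hentry : ∀ i j, N i j = t * ∑ e, w e * |x i e - x j e| ^ p := fun i j => by
    simp only [N, Matrix.sum_apply, Matrix.smul_apply, of_apply, smul_eq_mul, Finset.mul_sum,
      mul_assoc]
  simpa only [star_trivial, dotProduct_mulVec_eq_sum_sum, map_apply, hentry] using
    hN.posSemidef_map_exp_neg.dotProduct_mulVec_nonneg c

/-- For `1 ≤ p ≤ 2`, `t > 0` and nonnegative weights, the kernel
`(x, z) ↦ exp(-t ∑_e w_e |x_e - z_e|^p)` on `ℝ^m` is positive definite. -/
theorem exp_neg_weighted_lp_pow_positive_definite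
    (p : ℝ) (hp1 : 1 ≤ p) (hp2 : p ≤ 2)
    (t : ℝ) (ht : 0 < t)
    (m : ℕ) (hm : 0 < m) (w : Fin m → ℝ) (hw : ∀ e, 0 ≤ w e) :
    ∀ (n : ℕ), 1 ≤ n → ∀ (x : Fin n → Fin m → ℝ) (c : Fin n → ℝ),
      0 ≤ ∑ i, ∑ j, c i * c j *
        Real.exp (-(t * ∑ e, w e * |x i e - x j e| ^ p)) :=
  exp_neg_weighted_lp_pow_positive_definite_general p hp1 hp2 t ht m w hw
end

section
/- Let μ and ν be Borel probability measures on ℝ supported in the interval [0, 1], and let 1 ≤ p < ∞. Then the 1-Wasserstein distance with cost c(x, y) = |x − y| satisfies W_1(μ, ν) ≤ ( ∫_0^1 | μ((t, 1]) − ν((t, 1]) |^p dt )^{1/p}, where W_1(μ, ν) := inf { ∫_{ℝ×ℝ} |x − y| π(dx, dy) : π a Borel probability measure on ℝ × ℝ whose first marginal is μ and whose second marginal is ν }. -/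
/-!
Couple `μ` and `ν` through their quantile functions on `(0, 1)`. The cost of this coupling is the
area between the two quantile graphs, which is also the area between the two distribution
functions, `∫₀¹ |F_μ - F_ν|`; on `[0, 1]` one has `μ((t, 1]) = 1 - F_μ(t)`. Jensen's inequality on
the probability space `[0, 1]` then bounds this `L¹` norm by the `Lᵖ` norm.
-/

open MeasureTheory ProbabilityTheory Set Filter Topology
open scoped ENNReal symmDiff

namespace Set

variable {α : Type*} [LinearOrder α]

lemma Iio_symmDiff_Iio (a b : α) : Iio a ∆ Iio b = Ico (min a b) (max a b) := by
  ext x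
  simp only [mem_symmDiff, mem_Iio, mem_Ico, min_le_iff, lt_max_iff]
  grind

lemma Ioi_symmDiff_Ioi (a b : α) : Ioi a ∆ Ioi b = Ioc (min a b) (max a b) := by
  ext x
  simp only [mem_symmDiff, mem_Ioi, mem_Ioc, min_lt_iff, le_max_iff]
  grind

end Set

namespace MeasureTheory

theorem integral_le_integral_rpow_rpow_one_div {α : Type*} [MeasurableSpace α] {m : Measure α}
    [IsProbabilityMeasure m] {f : α → ℝ} {p : ℝ} (hp : 1 ≤ p) (hf : 0 ≤ᵐ[m] f)
    (hfi : Integrable f m) (hfpi : Integrable (fun x => f x ^ p) m) :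
    ∫ x, f x ∂m ≤ (∫ x, f x ^ p ∂m) ^ (1 / p) := by
  have hjensen : (∫ x, f x ∂m) ^ p ≤ ∫ x, f x ^ p ∂m :=
    (convexOn_rpow hp).map_integral_le (Real.continuous_rpow_const (by linarith)).continuousOn
      isClosed_Ici hf hfi hfpi
  calc ∫ x, f x ∂m = ((∫ x, f x ∂m) ^ p) ^ (1 / p) := by
        rw [← Real.rpow_mul (integral_nonneg_of_ae hf), mul_one_div_cancel (by linarith),
          Real.rpow_one]
    _ ≤ (∫ x, f x ^ p ∂m) ^ (1 / p) :=
        Real.rpow_le_rpow (Real.rpow_nonneg (integral_nonneg_of_ae hf) p) hjensen (by positivity)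

end MeasureTheory

namespace ProbabilityTheory

/-- Only the values on `(0, 1)` are meaningful: elsewhere the infimum is over an empty or an
unbounded-below set. -/
noncomputable def quantile (μ : Measure ℝ) (u : ℝ) : ℝ :=
  sInf {x | u ≤ cdf μ x}

section Quantile

variable {μ : Measure ℝ} {u x : ℝ}

lemma nonempty_setOf_le_cdf (hu : u < 1) : {x | u ≤ cdf μ x}.Nonempty :=
  ((tendsto_cdf_atTop μ).eventually_const_le hu).exists

lemma bddBelow_setOf_le_cdf (hu : 0 < u) : BddBelow {x | u ≤ cdf μ x} := by
  obtain ⟨x₀, hx₀⟩ := eventually_atBot.mp ((tendsto_cdf_atBot μ).eventually_lt_const hu)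
  refine ⟨x₀, fun x hx => le_of_not_ge fun hxx₀ => ?_⟩
  exact (hx₀ x hxx₀).not_ge hx

lemma le_cdf_quantile (hu : u ∈ Ioo 0 1) : u ≤ cdf μ (quantile μ u) := by
  have hright : Tendsto (cdf μ) (𝓝[>] quantile μ u) (𝓝 (cdf μ (quantile μ u))) :=
    ((cdf μ).right_continuous _).mono Ioi_subset_Ici_self
  refine ge_of_tendsto hright (eventually_nhdsWithin_of_forall fun y hy => ?_)
  obtain ⟨x, hx, hxy⟩ := exists_lt_of_csInf_lt (nonempty_setOf_le_cdf hu.2) hy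
  exact hx.trans (monotone_cdf μ hxy.le)

lemma quantile_le_iff (hu : u ∈ Ioo 0 1) : quantile μ u ≤ x ↔ u ≤ cdf μ x :=
  ⟨fun h => (le_cdf_quantile hu).trans (monotone_cdf μ h),
    fun h => csInf_le (bddBelow_setOf_le_cdf hu.1) h⟩

lemma lt_quantile_iff (hu : u ∈ Ioo 0 1) : x < quantile μ u ↔ cdf μ x < u := by
  rw [← not_le, ← not_le, quantile_le_iff hu]

lemma monotoneOn_quantile : MonotoneOn (quantile μ) (Ioo 0 1) :=
  fun _ hu _ hv huv => csInf_le_csInf (bddBelow_setOf_le_cdf hu.1) (nonempty_setOf_le_cdf hv.2)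
    fun _ hx => huv.trans hx

lemma aemeasurable_quantile : AEMeasurable (quantile μ) (volume.restrict (Ioo 0 1)) :=
  aemeasurable_restrict_of_monotoneOn measurableSet_Ioo monotoneOn_quantile

instance : IsProbabilityMeasure (volume.restrict (Ioo (0 : ℝ) 1)) := ⟨by simp⟩

lemma map_quantile [IsProbabilityMeasure μ] :
    (volume.restrict (Ioo 0 1)).map (quantile μ) = μ := by
  refine Measure.ext_of_Iic _ _ fun x => ?_
  have hpre : quantile μ ⁻¹' Iic x ∩ Ioo 0 1 = Iic (cdf μ x) ∩ Ioo 0 1 := by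
    ext u
    simp only [mem_inter_iff, mem_preimage, mem_Iic, and_congr_left_iff]
    exact fun hu => quantile_le_iff hu
  rw [Measure.map_apply_of_aemeasurable aemeasurable_quantile measurableSet_Iic,
    Measure.restrict_apply' measurableSet_Ioo, hpre, ← Measure.restrict_apply' measurableSet_Ioo,
    Measure.restrict_congr_set Ioo_ae_eq_Ioc, Measure.restrict_apply measurableSet_Iic,
    Iic_inter_Ioc_of_le (cdf_le_one μ x), Real.volume_Ioc, sub_zero, ofReal_cdf]

end Quantile

noncomputable def quantileCoupling (μ ν : Measure ℝ) : Measure (ℝ × ℝ) :=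
  (volume.restrict (Ioo 0 1)).map fun u => (quantile μ u, quantile ν u)

section QuantileCoupling

variable (μ ν : Measure ℝ)

lemma aemeasurable_quantile_prod :
    AEMeasurable (fun u => (quantile μ u, quantile ν u)) (volume.restrict (Ioo 0 1)) :=
  aemeasurable_quantile.prodMk aemeasurable_quantile

instance : IsProbabilityMeasure (quantileCoupling μ ν) :=
  Measure.isProbabilityMeasure_map (aemeasurable_quantile_prod μ ν)

lemma map_fst_quantileCoupling [IsProbabilityMeasure μ] :
    (quantileCoupling μ ν).map Prod.fst = μ := by
  rw [quantileCoupling, AEMeasurable.map_map_of_aemeasurable measurable_fst.aemeasurable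
    (aemeasurable_quantile_prod μ ν)]
  exact map_quantile

lemma map_snd_quantileCoupling [IsProbabilityMeasure ν] :
    (quantileCoupling μ ν).map Prod.snd = ν := by
  rw [quantileCoupling, AEMeasurable.map_map_of_aemeasurable measurable_snd.aemeasurable
    (aemeasurable_quantile_prod μ ν)]
  exact map_quantile

end QuantileCoupling

section AreaBetweenGraphs

variable (μ ν : Measure ℝ)

/-- Both sides compute the area between the graphs of `cdf μ` and `cdf ν`: by Tonelli, slicing
the region `{(u, t) | u lies between cdf μ t and cdf ν t}` horizontally and vertically. -/
theorem lintegral_abs_quantile_sub_quantile :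
    ∫⁻ u in Ioo 0 1, ENNReal.ofReal |quantile μ u - quantile ν u| =
      ∫⁻ t, ENNReal.ofReal |cdf μ t - cdf ν t| := by
  set S : Set (ℝ × ℝ) := {z | cdf μ z.2 < z.1} ∆ {z | cdf ν z.2 < z.1}
  have hS : MeasurableSet S :=
    (measurableSet_lt ((monotone_cdf μ).measurable.comp measurable_snd) measurable_fst).symmDiff
      (measurableSet_lt ((monotone_cdf ν).measurable.comp measurable_snd) measurable_fst)
  have hslice_u : ∀ u ∈ Ioo (0 : ℝ) 1,
      Prod.mk u ⁻¹' S = Iio (quantile μ u) ∆ Iio (quantile ν u) := by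
    intro u hu
    ext t
    simp only [S, preimage_symmDiff, mem_symmDiff, mem_preimage, mem_ofPred_eq, mem_Iio,
      lt_quantile_iff hu]
  calc ∫⁻ u in Ioo 0 1, ENNReal.ofReal |quantile μ u - quantile ν u|
      = ∫⁻ u in Ioo 0 1, volume (Prod.mk u ⁻¹' S) := by
        refine setLIntegral_congr_fun measurableSet_Ioo fun u hu => ?_
        rw [hslice_u u hu, Iio_symmDiff_Iio, Real.volume_Ico, max_sub_min_eq_abs']
    _ = (volume.restrict (Ioo 0 1)).prod volume S := (Measure.prod_apply hS).symm
    _ = ∫⁻ t, volume.restrict (Ioo 0 1) ((fun u => (u, t)) ⁻¹' S) :=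
        Measure.prod_apply_symm hS
    _ = ∫⁻ t, ENNReal.ofReal |cdf μ t - cdf ν t| := by
        refine lintegral_congr fun t => ?_
        have hsub : Ioc (min (cdf μ t) (cdf ν t)) (max (cdf μ t) (cdf ν t)) ⊆ Ioc 0 1 :=
          Ioc_subset_Ioc (le_min (cdf_nonneg μ t) (cdf_nonneg ν t))
            (max_le (cdf_le_one μ t) (cdf_le_one ν t))
        change volume.restrict _ (Ioi (cdf μ t) ∆ Ioi (cdf ν t)) = _
        rw [Measure.restrict_congr_set Ioo_ae_eq_Ioc, Ioi_symmDiff_Ioi,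
          Measure.restrict_apply measurableSet_Ioc, inter_eq_left.mpr hsub, Real.volume_Ioc,
          max_sub_min_eq_abs']

theorem integral_abs_sub_quantileCoupling :
    ∫ z, |z.1 - z.2| ∂(quantileCoupling μ ν) = ∫ t, |cdf μ t - cdf ν t| := by
  have hcdf : Measurable fun t => |cdf μ t - cdf ν t| := by
    have := (monotone_cdf μ).measurable; have := (monotone_cdf ν).measurable; fun_prop
  rw [quantileCoupling, integral_map (aemeasurable_quantile_prod μ ν) (by fun_prop),
    integral_eq_lintegral_of_nonneg_ae (f := fun u => |quantile μ u - quantile ν u|)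
      (ae_of_all _ fun _ => abs_nonneg _)
      (aemeasurable_quantile.sub aemeasurable_quantile).abs.aestronglyMeasurable,
    integral_eq_lintegral_of_nonneg_ae (ae_of_all _ fun _ => abs_nonneg _)
      hcdf.aestronglyMeasurable,
    lintegral_abs_quantile_sub_quantile]

end AreaBetweenGraphs

section Support

variable (μ ν : Measure ℝ)

lemma integrable_abs_cdf_sub_cdf_rpow (m : Measure ℝ) [IsFiniteMeasure m] {q : ℝ}
    (hq : 0 ≤ q) :
    Integrable (fun t => |cdf μ t - cdf ν t| ^ q) m := by
  have hcdf : Measurable fun t => |cdf μ t - cdf ν t| ^ q := by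
    have := (monotone_cdf μ).measurable; have := (monotone_cdf ν).measurable; fun_prop
  refine Integrable.of_bound hcdf.aestronglyMeasurable 1 (ae_of_all _ fun t => ?_)
  have hle : |cdf μ t - cdf ν t| ≤ 1 := abs_sub_le_of_nonneg_of_le (cdf_nonneg μ t)
    (cdf_le_one μ t) (cdf_nonneg ν t) (cdf_le_one ν t)
  rw [Real.norm_of_nonneg (by positivity)]
  exact Real.rpow_le_one (abs_nonneg _) hle hq

variable {μ} [IsProbabilityMeasure μ] {a b t : ℝ}

lemma cdf_eq_zero_of_lt (hμ : μ (Icc a b) = 1) (ht : t < a) : cdf μ t = 0 := by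
  have hnull : μ (Iic t) = 0 :=
    measure_mono_null
      (fun x (hx : x ≤ t) (hxab : x ∈ Icc a b) => (hx.trans_lt ht).not_ge hxab.1)
      (prob_compl_eq_zero_iff measurableSet_Icc |>.mpr hμ)
  rw [cdf_eq_real, measureReal_def, hnull, ENNReal.toReal_zero]

lemma cdf_eq_one_of_le (hμ : μ (Icc a b) = 1) (ht : b ≤ t) : cdf μ t = 1 := by
  have hfull : μ (Iic t) = 1 :=
    le_antisymm prob_le_one (hμ ▸ measure_mono fun x hx => hx.2.trans ht)
  rw [cdf_eq_real, measureReal_def, hfull, ENNReal.toReal_one]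

lemma measure_Ioc_toReal_eq_cdf_sub (hab : a ≤ b) :
    (μ (Ioc a b)).toReal = cdf μ b - cdf μ a := by
  conv_lhs => rw [← measure_cdf μ]
  rw [StieltjesFunction.measure_Ioc, ENNReal.toReal_ofReal (sub_nonneg.mpr (monotone_cdf μ hab))]

variable {ν} [IsProbabilityMeasure ν]

lemma abs_cdf_sub_cdf_eq_zero_of_notMem (hμ : μ (Icc a b) = 1) (hν : ν (Icc a b) = 1)
    (ht : t ∉ Icc a b) : |cdf μ t - cdf ν t| = 0 := by
  rw [mem_Icc, not_and_or, not_le, not_le] at ht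
  rcases ht with ht | ht
  · rw [cdf_eq_zero_of_lt hμ ht, cdf_eq_zero_of_lt hν ht, sub_zero, abs_zero]
  · rw [cdf_eq_one_of_le hμ ht.le, cdf_eq_one_of_le hν ht.le, sub_self, abs_zero]

lemma abs_measure_Ioc_toReal_sub (hμ : μ (Icc a b) = 1) (hν : ν (Icc a b) = 1) (ht : t ≤ b) :
    |(μ (Ioc t b)).toReal - (ν (Ioc t b)).toReal| = |cdf μ t - cdf ν t| := by
  rw [measure_Ioc_toReal_eq_cdf_sub ht, measure_Ioc_toReal_eq_cdf_sub ht,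
    cdf_eq_one_of_le hμ le_rfl, cdf_eq_one_of_le hν le_rfl, sub_sub_sub_cancel_left, abs_sub_comm]

end Support

noncomputable def wassersteinOne (μ ν : Measure ℝ) : ℝ :=
  sInf {r : ℝ | ∃ π : Measure (ℝ × ℝ), IsProbabilityMeasure π ∧
    π.map Prod.fst = μ ∧ π.map Prod.snd = ν ∧ r = ∫ z, |z.1 - z.2| ∂π}

lemma wassersteinOne_le_integral {μ ν : Measure ℝ} {π : Measure (ℝ × ℝ)}
    [IsProbabilityMeasure π]
    (hfst : π.map Prod.fst = μ) (hsnd : π.map Prod.snd = ν) :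
    wassersteinOne μ ν ≤ ∫ z, |z.1 - z.2| ∂π :=
  csInf_le ⟨0, by rintro r ⟨π, -, -, -, rfl⟩; exact integral_nonneg fun _ => abs_nonneg _⟩
    ⟨π, inferInstance, hfst, hsnd, rfl⟩

end ProbabilityTheory

/-- For probability measures supported in `[0,1]` and `1 ≤ p < ∞`, the 1-Wasserstein distance
with cost `|x - y|` is bounded by `(∫_0^1 |μ((t,1]) - ν((t,1])|^p dt)^{1/p}`. -/
theorem wasserstein_one_le_sobolev_transport_unit_interval
    (μ ν : Measure ℝ) [IsProbabilityMeasure μ] [IsProbabilityMeasure ν]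
    (hμ : μ (Set.Icc (0 : ℝ) 1) = 1) (hν : ν (Set.Icc (0 : ℝ) 1) = 1)
    (p : ℝ) (hp : 1 ≤ p) :
    sInf {r : ℝ | ∃ π : Measure (ℝ × ℝ), IsProbabilityMeasure π ∧
        π.map Prod.fst = μ ∧ π.map Prod.snd = ν ∧
        r = ∫ z, |z.1 - z.2| ∂π} ≤
      (∫ t in (0 : ℝ)..1, |(μ (Set.Ioc t 1)).toReal - (ν (Set.Ioc t 1)).toReal| ^ p)
        ^ (1 / p) := by
  have : IsProbabilityMeasure (volume.restrict (Ioc (0 : ℝ) 1)) := ⟨by simp⟩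
  calc wassersteinOne μ ν ≤ ∫ z, |z.1 - z.2| ∂(quantileCoupling μ ν) :=
        wassersteinOne_le_integral (map_fst_quantileCoupling μ ν) (map_snd_quantileCoupling μ ν)
    _ = ∫ t in Ioc 0 1, |cdf μ t - cdf ν t| := by
        rw [integral_abs_sub_quantileCoupling, ← integral_Icc_eq_integral_Ioc,
          setIntegral_eq_integral_of_forall_compl_eq_zero
            fun t ht => abs_cdf_sub_cdf_eq_zero_of_notMem hμ hν ht]
    _ ≤ (∫ t in Ioc 0 1, |cdf μ t - cdf ν t| ^ p) ^ (1 / p) :=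
        integral_le_integral_rpow_rpow_one_div hp (ae_of_all _ fun _ => abs_nonneg _)
          (by simpa using integrable_abs_cdf_sub_cdf_rpow μ ν _ zero_le_one)
          (integrable_abs_cdf_sub_cdf_rpow μ ν _ (by linarith))
    _ = _ := by
        rw [intervalIntegral.integral_of_le zero_le_one]
        refine congrArg (· ^ (1 / p)) (setIntegral_congr_fun measurableSet_Ioc fun t ht => ?_)
        rw [abs_measure_Ioc_toReal_sub hμ hν ht.2]
end
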